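/- arXiv:2307.02818 — 5 statements merged into one kernel-verified Lean document; each statement's English description precedes it below -/
import Mathlib

section
/- Fix r ≥ 2, M > 0, 2 ≤ s ≤ r and δ ∈ (0,1). Then there exists a constant C > 0 (depending on M, r, δ) such that for all large n the following two minimax lower bounds hold for estimation from one observation of the s-uniform hypergraph β-model: (i) inf over all estimators β̂ (measurable functions of the observed hypergraph) of sup over β_s ∈ B(M) of P_{β_s}(‖β̂ − β_s‖_2 ≥ C·n^{-(s-2)/2}) is at least 1 − δ; (ii) inf over all estimators β̂ of sup over β_s ∈ B(M) of P_{β_s}(‖β̂ − β_s‖_∞ ≥ C·n^{-(s-1)/2}) is at least 1 − δ. -/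
open MeasureTheory ProbabilityTheory Filter Finset Matrix

noncomputable section

/-- The logistic function `x ↦ eˣ/(1+eˣ)`. -/
def logistic (x : ℝ) : ℝ := Real.exp x / (1 + Real.exp x)

/-- A Bernoulli measure on `Bool` with success probability `p`. -/
def bernoulliBool (p : ℝ) : Measure Bool :=
  ENNReal.ofReal p • Measure.dirac true + ENNReal.ofReal (1 - p) • Measure.dirac false

instance (p : ℝ) : IsFiniteMeasure (bernoulliBool p) := by
  constructor
  simp only [bernoulliBool, Measure.coe_add, Measure.coe_smul, Pi.add_apply, Pi.smul_apply,
    smul_eq_mul]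
  exact ENNReal.add_lt_top.mpr
    ⟨ENNReal.mul_lt_top ENNReal.ofReal_lt_top (measure_lt_top _ _),
     ENNReal.mul_lt_top ENNReal.ofReal_lt_top (measure_lt_top _ _)⟩

/-- The `r`-layered hypergraph β-model `H_[r](n, B)`: a random hypergraph on `[n]`, encoded as a
random function `Finset (Fin n) → Bool`, in which each set `e` with `2 ≤ |e| ≤ r` is a hyperedge
independently with probability `logistic (∑_{v ∈ e} β_{|e|, v})`, and no other set is a
hyperedge. -/
def layeredModel (n r : ℕ) (β : ℕ → Fin n → ℝ) : Measure (Finset (Fin n) → Bool) :=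
  Measure.pi fun e =>
    bernoulliBool (if 2 ≤ e.card ∧ e.card ≤ r then logistic (∑ v ∈ e, β e.card v) else 0)

/-- The `s`-uniform hypergraph β-model `H_s(n, β)`. -/
def uniformModel (n s : ℕ) (β : Fin n → ℝ) : Measure (Finset (Fin n) → Bool) :=
  Measure.pi fun e =>
    bernoulliBool (if e.card = s then logistic (∑ v ∈ e, β v) else 0)

/-- The `s`-degree `d_s(v)`: the number of hyperedges of size `s` containing `v`. -/
def degree (n s : ℕ) (H : Finset (Fin n) → Bool) (v : Fin n) : ℕ :=
  (Finset.univ.filter fun e : Finset (Fin n) => e.card = s ∧ v ∈ e ∧ H e = true).card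

/-- The expected `s`-degree `E[d_s(v)]` under parameter `β`. -/
def expectedDegree (n s : ℕ) (β : Fin n → ℝ) (v : Fin n) : ℝ :=
  ∑ e ∈ Finset.univ.filter (fun e : Finset (Fin n) => e.card = s ∧ v ∈ e),
    logistic (∑ u ∈ e, β u)

/-- The negative log-likelihood `ℓ_{n,s}`. -/
def negLogLik (n s : ℕ) (H : Finset (Fin n) → Bool) (β : Fin n → ℝ) : ℝ :=
  (∑ e ∈ Finset.univ.filter (fun e : Finset (Fin n) => e.card = s),
      Real.log (1 + Real.exp (∑ v ∈ e, β v)))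
    - ∑ v, β v * (degree n s H v : ℝ)

/-- `b` is a maximum likelihood estimate for the `s`-uniform model given the observation `H`. -/
def IsMLE (n s : ℕ) (H : Finset (Fin n) → Bool) (b : Fin n → ℝ) : Prop :=
  ∀ β : Fin n → ℝ, negLogLik n s H b ≤ negLogLik n s H β

/-- The Euclidean (L2) norm on `ℝ^n`. -/
def l2norm {n : ℕ} (x : Fin n → ℝ) : ℝ := Real.sqrt (∑ v, x v ^ 2)

/-- The maximum (L∞) norm on `ℝ^n`. -/
def supNorm {n : ℕ} (x : Fin n → ℝ) : ℝ := ⨆ v, |x v|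

/-- The matrix `Σ_{n,s}` with entries
`σ_s(u,v) = ∑_{e : |e| = s, u,v ∈ e} exp(∑_{w ∈ e} β_w)/(1+exp(∑_{w ∈ e} β_w))²`,
which is both the covariance matrix of the degree vector and the Hessian `∇²ℓ_{n,s}(β)`. -/
def covMat (n s : ℕ) (β : Fin n → ℝ) : Matrix (Fin n) (Fin n) ℝ :=
  Matrix.of fun u v =>
    ∑ e ∈ Finset.univ.filter (fun e : Finset (Fin n) => e.card = s ∧ u ∈ e ∧ v ∈ e),
      Real.exp (∑ w ∈ e, β w) / (1 + Real.exp (∑ w ∈ e, β w)) ^ 2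

/-!
Perturb the null model `β = 0` by sign vectors `θ ∈ {±η}ⁿ` with `η = c n^{-(s-1)/2}`. The
likelihood ratio `L` of `H_s(n, θ)` against `H_s(n, 0)` is a product over hyperedges, and
`E₀[L²] ≤ exp (∑_{|e| = s} (∑_{v ∈ e} θ_v)²) ≤ exp (nˢ (s η)²) = exp ((s c)² n) ≤ e^{n/16}`
once `s c ≤ 1/4`; hence `P_θ(A) ≤ t P₀(A) + e^{n/16} / t` for every event `A` and `t > 0`.
If an estimator came within `τ` of each of `#T` pairwise `2τ`-separated hypotheses with
probability `> δ`, these acceptance events would be disjoint, so one of them would have null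
probability at most `1/#T`, which is impossible once `#T ≥ 4 e^{n/16} / δ²`. For the sup norm
all `2ⁿ` sign vectors are `2η`-separated; for the `ℓ²` norm a Gilbert–Varshamov code of
relative distance `1/4` has at least `(2 / (5√2/4))ⁿ` elements and is `η √n`-separated.
-/

namespace HypergraphBetaModel

section ChangeOfMeasure

variable {Ω : Type*} [MeasurableSpace Ω]

theorem exists_measureReal_le_inv_card {ι : Type*} (ν : Measure Ω) [IsProbabilityMeasure ν]
    {T : Finset ι} (hT : T.Nonempty) {A : ι → Set Ω} (hA : (T : Set ι).PairwiseDisjoint A)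
    (hmeas : ∀ j ∈ T, MeasurableSet (A j)) :
    ∃ j ∈ T, ν.real (A j) ≤ (#T : ℝ)⁻¹ := by
  refine exists_le_of_sum_le hT ?_
  rw [← measureReal_biUnion_finset hA hmeas, sum_const, nsmul_eq_mul,
    mul_inv_cancel₀ (by exact_mod_cast hT.card_pos.ne')]
  exact measureReal_le_one

variable [Fintype Ω] [MeasurableSingletonClass Ω]

theorem measureReal_eq_sum_filter (μ : Measure Ω) [IsFiniteMeasure μ] (A : Set Ω)
    [DecidablePred (· ∈ A)] : μ.real A = ∑ ω ∈ univ.filter (· ∈ A), μ.real {ω} := by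
  rw [sum_measureReal_singleton, coe_filter_univ, Set.ofPred_mem_eq]

theorem measureReal_le_mul_add_inv_mul_sum_sq (μ ν : Measure Ω) [IsFiniteMeasure μ]
    [IsFiniteMeasure ν] (L : Ω → ℝ) (hL : ∀ ω, μ.real {ω} = L ω * ν.real {ω}) (A : Set Ω)
    {t : ℝ} (ht : 0 < t) :
    μ.real A ≤ t * ν.real A + t⁻¹ * ∑ ω, L ω ^ 2 * ν.real {ω} := by
  classical
  have hpoint : ∀ ω, μ.real {ω} ≤ t * ν.real {ω} + t⁻¹ * (L ω ^ 2 * ν.real {ω}) := by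
    intro ω
    rw [hL, ← sub_nonneg]
    have : t * ν.real {ω} + t⁻¹ * (L ω ^ 2 * ν.real {ω}) - L ω * ν.real {ω}
        = t⁻¹ * ν.real {ω} * ((t - L ω / 2) ^ 2 + 3 / 4 * L ω ^ 2) := by
      field_simp; ring
    rw [this]; positivity
  calc μ.real A
      ≤ ∑ ω ∈ univ.filter (fun ω => ω ∈ A), (t * ν.real {ω} + t⁻¹ * (L ω ^ 2 * ν.real {ω})) := by
        rw [measureReal_eq_sum_filter]; exact sum_le_sum fun ω _ => hpoint ω
    _ ≤ t * ν.real A + t⁻¹ * ∑ ω, L ω ^ 2 * ν.real {ω} := by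
        rw [sum_add_distrib, ← mul_sum, ← mul_sum, ← measureReal_eq_sum_filter]
        have hA : ∑ ω ∈ univ.filter (fun ω => ω ∈ A), L ω ^ 2 * ν.real {ω}
            ≤ ∑ ω, L ω ^ 2 * ν.real {ω} :=
          sum_le_univ_sum_of_nonneg fun ω => mul_nonneg (sq_nonneg _) measureReal_nonneg
        gcongr

theorem exists_measureReal_le_of_pairwiseDisjoint {ι : Type*} (ν : Measure Ω)
    [IsProbabilityMeasure ν] (μ : ι → Measure Ω) [∀ j, IsFiniteMeasure (μ j)] (L : ι → Ω → ℝ)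
    (hL : ∀ j ω, (μ j).real {ω} = L j ω * ν.real {ω}) {T : Finset ι} (hT : T.Nonempty)
    {A : ι → Set Ω} (hA : (T : Set ι).PairwiseDisjoint A) {B δ : ℝ} (hδ : 0 < δ)
    (hB : ∀ j ∈ T, ∑ ω, L j ω ^ 2 * ν.real {ω} ≤ B) (hBT : 4 * B ≤ δ ^ 2 * #T) :
    ∃ j ∈ T, (μ j).real (A j) ≤ δ := by
  obtain ⟨j, hj, hνj⟩ := exists_measureReal_le_inv_card ν hT hA
    fun j _ => (Set.toFinite (A j)).measurableSet
  have hcard : (0 : ℝ) < #T := by exact_mod_cast hT.card_pos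
  have ht : 0 < δ * #T / 2 := by positivity
  refine ⟨j, hj, (measureReal_le_mul_add_inv_mul_sum_sq _ _ _ (hL j) (A j) ht).trans ?_⟩
  have hB' : (δ * #T / 2)⁻¹ * B ≤ δ / 2 := by
    rw [inv_mul_le_iff₀ ht]; nlinarith
  calc δ * #T / 2 * ν.real (A j) + (δ * #T / 2)⁻¹ * ∑ ω, L j ω ^ 2 * ν.real {ω}
      ≤ δ * #T / 2 * (#T : ℝ)⁻¹ + (δ * #T / 2)⁻¹ * B := by gcongr; exact hB j hj
    _ ≤ δ := by rw [show δ * #T / 2 * (#T : ℝ)⁻¹ = δ / 2 by field_simp]; linarith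

end ChangeOfMeasure

theorem le_dist_or_le_dist {E : Type*} [PseudoMetricSpace E] {a b : E} {τ : ℝ}
    (h : 2 * τ ≤ dist a b) (z : E) : τ ≤ dist z a ∨ τ ≤ dist z b := by
  by_contra! hz
  linarith [dist_triangle_left a b z]

section Codes

variable {ι : Type*} [Fintype ι] [DecidableEq ι]

theorem card_filter_hammingDist_lt_le (y : ι → Bool) (m : ℕ) :
    #{x | hammingDist x y < m} ≤ ∑ j ∈ range m, (Fintype.card ι).choose j := by
  let flipOn : Finset ι → ι → Bool := fun D i => if i ∈ D then !y i else y i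
  calc #{x | hammingDist x y < m}
      ≤ #(((range m).biUnion fun j => powersetCard j univ).image flipOn) := by
        refine card_le_card fun x hx => mem_image.2 ⟨({i | x i ≠ y i} : Finset ι), ?_, ?_⟩
        · simp only [mem_filter, mem_univ, true_and] at hx
          exact mem_biUnion.2 ⟨_, mem_range.2 hx, mem_powersetCard.2 ⟨subset_univ _, rfl⟩⟩
        · funext i
          cases hxi : x i <;> cases hyi : y i <;> simp [flipOn, hxi, hyi]
    _ ≤ #((range m).biUnion fun j => powersetCard j (univ : Finset ι)) := card_image_le
    _ ≤ ∑ j ∈ range m, #(powersetCard j (univ : Finset ι)) := card_biUnion_le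
    _ = ∑ j ∈ range m, (Fintype.card ι).choose j := by simp [card_powersetCard]

theorem exists_code_gilbert_varshamov {m : ℕ} (hm : 0 < m) :
    ∃ S : Finset (ι → Bool), (∀ x ∈ S, ∀ y ∈ S, x ≠ y → m ≤ hammingDist x y) ∧
      2 ^ Fintype.card ι ≤ #S * ∑ j ∈ range m, (Fintype.card ι).choose j := by
  let codes := (univ : Finset (ι → Bool)).powerset.filter
    fun S => ∀ x ∈ S, ∀ y ∈ S, x ≠ y → m ≤ hammingDist x y
  obtain ⟨S, hS, hSmax⟩ := codes.exists_max_image card ⟨∅, by simp [codes]⟩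
  have hScode := (mem_filter.1 hS).2
  refine ⟨S, hScode, ?_⟩
  have hcover : ∀ x, ∃ y ∈ S, hammingDist x y < m := by
    by_contra! hfar
    obtain ⟨x, hx⟩ := hfar
    have hxS : x ∉ S := fun hxS => by have := hx x hxS; simp at this; omega
    have hins : insert x S ∈ codes := by
      refine mem_filter.2 ⟨mem_powerset.2 (subset_univ _), ?_⟩
      simp only [mem_insert]
      rintro a (rfl | ha) b (rfl | hb) hab
      · exact absurd rfl hab
      · exact hx b hb
      · rw [hammingDist_comm]; exact hx a ha
      · exact hScode a ha b hb hab
    have := hSmax _ hins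
    rw [card_insert_of_notMem hxS] at this
    omega
  calc 2 ^ Fintype.card ι = #(univ : Finset (ι → Bool)) := by simp
    _ ≤ #(S.biUnion fun y => {x | hammingDist x y < m}) := card_le_card fun x _ => by
        obtain ⟨y, hy, hxy⟩ := hcover x
        exact mem_biUnion.2 ⟨y, hy, by simpa using hxy⟩
    _ ≤ ∑ y ∈ S, #{x | hammingDist x y < m} := card_biUnion_le
    _ ≤ #S * ∑ j ∈ range m, (Fintype.card ι).choose j := by
        rw [← smul_eq_mul]
        exact sum_le_card_nsmul _ _ _ fun y _ => card_filter_hammingDist_lt_le y m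

end Codes

theorem sum_range_choose_mul_pow_le {a : ℝ} (ha0 : 0 ≤ a) (ha1 : a ≤ 1) {n k : ℕ}
    (hk : k ≤ n) :
    (∑ j ∈ range (k + 1), (n.choose j : ℝ)) * a ^ k ≤ (1 + a) ^ n := by
  calc (∑ j ∈ range (k + 1), (n.choose j : ℝ)) * a ^ k
      ≤ ∑ j ∈ range (k + 1), (n.choose j : ℝ) * a ^ j := by
        rw [sum_mul]
        exact sum_le_sum fun j hj =>
          mul_le_mul_of_nonneg_left (pow_le_pow_of_le_one ha0 ha1 (mem_range_succ_iff.1 hj))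
            (Nat.cast_nonneg _)
    _ ≤ ∑ j ∈ range (n + 1), (n.choose j : ℝ) * a ^ j :=
        sum_le_sum_of_subset_of_nonneg (range_subset_range.2 (by omega))
          fun j _ _ => by positivity
    _ = (1 + a) ^ n := by
        rw [add_comm 1 a, add_pow]
        exact sum_congr rfl fun j _ => by rw [one_pow]; ring

theorem exists_code_quarter_hammingDist (n : ℕ) :
    ∃ S : Finset (Fin n → Bool), (∀ x ∈ S, ∀ y ∈ S, x ≠ y → n ≤ 4 * hammingDist x y) ∧
      (2 : ℝ) ^ n ≤ #S * (5 / 4 * √2) ^ n := by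
  obtain ⟨S, hS, hcard⟩ :=
    exists_code_gilbert_varshamov (ι := Fin n) (m := n / 4 + 1) (by omega)
  refine ⟨S, fun x hx y hy hxy => by have := hS x hx y hy hxy; omega, ?_⟩
  rw [Fintype.card_fin] at hcard
  have hball : (∑ j ∈ range (n / 4 + 1), (n.choose j : ℝ)) ≤ (5 / 4 * √2) ^ n := by
    have h := sum_range_choose_mul_pow_le (a := 1 / 4) (by norm_num) (by norm_num)
      (Nat.div_le_self n 4)
    have hsqrt : (4 : ℝ) ^ (n / 4) ≤ √2 ^ n := by
      have h4 : √2 ^ 4 = (4 : ℝ) := by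
        rw [show (4 : ℕ) = 2 * 2 from rfl, pow_mul, Real.sq_sqrt zero_le_two]; norm_num
      rw [← h4, ← pow_mul]
      exact pow_le_pow_right₀ (by norm_num) (by omega)
    rw [mul_pow]
    calc (∑ j ∈ range (n / 4 + 1), (n.choose j : ℝ))
        = (∑ j ∈ range (n / 4 + 1), (n.choose j : ℝ)) * (1 / 4) ^ (n / 4) * 4 ^ (n / 4) := by
          rw [mul_assoc, ← mul_pow]; norm_num
      _ ≤ (1 + 1 / 4) ^ n * √2 ^ n := by gcongr
      _ = (5 / 4) ^ n * √2 ^ n := by norm_num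
  calc (2 : ℝ) ^ n ≤ #S * ∑ j ∈ range (n / 4 + 1), (n.choose j : ℝ) := by
        exact_mod_cast hcard
    _ ≤ #S * (5 / 4 * √2) ^ n := by gcongr

def bernoulliMass (p : ℝ) (b : Bool) : ℝ := if b then p else 1 - p

theorem bernoulliBool_singleton (p : ℝ) (b : Bool) :
    bernoulliBool p {b} = ENNReal.ofReal (bernoulliMass p b) := by
  cases b <;> simp [bernoulliBool, bernoulliMass]

theorem bernoulliMass_nonneg {p : ℝ} (hp : p ∈ Set.Icc 0 1) (b : Bool) :
    0 ≤ bernoulliMass p b := by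
  cases b <;> simp [bernoulliMass, hp.1, hp.2]

theorem isProbabilityMeasure_bernoulliBool {p : ℝ} (hp : p ∈ Set.Icc 0 1) :
    IsProbabilityMeasure (bernoulliBool p) := by
  constructor
  simp [bernoulliBool, ← ENNReal.ofReal_add hp.1 (sub_nonneg.2 hp.2)]

theorem logistic_zero : logistic 0 = 1 / 2 := by norm_num [logistic]

theorem logistic_mem_Icc (x : ℝ) : logistic x ∈ Set.Icc 0 1 := by
  unfold logistic
  constructor
  · positivity
  · rw [div_le_one (by positivity)]; linarith

theorem sq_two_mul_logistic_sub_one_le (x : ℝ) : (2 * logistic x - 1) ^ 2 ≤ x ^ 2 := by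
  have hpos : 0 < 1 + Real.exp x := by positivity
  have hexp := Real.add_one_le_exp x
  have hexp_neg := Real.add_one_le_exp (-x)
  have hexp_mul : Real.exp (-x) * Real.exp x = 1 := by rw [← Real.exp_add]; simp
  have key : |Real.exp x - 1| ≤ |x| * (1 + Real.exp x) := by
    rcases le_total 0 x with hx | hx
    · rw [abs_of_nonneg (by linarith), abs_of_nonneg hx]; nlinarith [Real.exp_pos x]
    · rw [abs_of_nonpos (by nlinarith [Real.exp_pos (-x)]), abs_of_nonpos hx]
      nlinarith [Real.exp_pos x]
  rw [show 2 * logistic x - 1 = (Real.exp x - 1) / (1 + Real.exp x) by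
    unfold logistic; field_simp; ring, div_pow, div_le_iff₀ (by positivity), ← sq_abs,
    ← sq_abs x, ← mul_pow]
  gcongr

section Model

variable {n s : ℕ}

def edgeProb (s : ℕ) (β : Fin n → ℝ) (e : Finset (Fin n)) : ℝ :=
  if e.card = s then logistic (∑ v ∈ e, β v) else 0

theorem edgeProb_mem_Icc (β : Fin n → ℝ) (e : Finset (Fin n)) :
    edgeProb s β e ∈ Set.Icc 0 1 := by
  unfold edgeProb
  split_ifs
  · exact logistic_mem_Icc _
  · simp

instance (β : Fin n → ℝ) : IsProbabilityMeasure (uniformModel n s β) := by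
  change IsProbabilityMeasure (Measure.pi fun e => bernoulliBool (edgeProb s β e))
  have := fun e => isProbabilityMeasure_bernoulliBool (edgeProb_mem_Icc (s := s) β e)
  infer_instance

theorem uniformModel_real_singleton (β : Fin n → ℝ) (H : Finset (Fin n) → Bool) :
    (uniformModel n s β).real {H} = ∏ e, bernoulliMass (edgeProb s β e) (H e) := by
  rw [measureReal_def, uniformModel, Measure.pi_singleton, ENNReal.toReal_prod]
  refine prod_congr rfl fun e _ => ?_
  rw [bernoulliBool_singleton]
  exact ENNReal.toReal_ofReal (bernoulliMass_nonneg (edgeProb_mem_Icc β e) _)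

/-- Against the null model `β = 0`, where every `s`-set is a hyperedge with probability `1/2`. -/
def likelihoodRatio (s : ℕ) (θ : Fin n → ℝ) (H : Finset (Fin n) → Bool) : ℝ :=
  ∏ e, if e.card = s then 2 * bernoulliMass (logistic (∑ v ∈ e, θ v)) (H e) else 1

theorem uniformModel_real_singleton_eq_mul (θ : Fin n → ℝ) (H : Finset (Fin n) → Bool) :
    (uniformModel n s θ).real {H} = likelihoodRatio s θ H * (uniformModel n s 0).real {H} := by
  rw [uniformModel_real_singleton, uniformModel_real_singleton, likelihoodRatio,
    ← prod_mul_distrib]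
  refine prod_congr rfl fun e _ => ?_
  unfold edgeProb
  split_ifs <;> cases H e <;> simp [bernoulliMass, logistic_zero] <;> ring

theorem sum_sq_likelihoodRatio_le (θ : Fin n → ℝ) :
    ∑ H, likelihoodRatio s θ H ^ 2 * (uniformModel n s 0).real {H}
      ≤ Real.exp (∑ e with e.card = s, (∑ v ∈ e, θ v) ^ 2) := by
  classical
  have hfactor : ∑ H, likelihoodRatio s θ H ^ 2 * (uniformModel n s 0).real {H}
      = ∏ e, ∑ b,
          (if e.card = s then 2 * bernoulliMass (logistic (∑ v ∈ e, θ v)) b else 1) ^ 2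
            * bernoulliMass (edgeProb s 0 e) b := by
    rw [Fintype.prod_sum]
    refine sum_congr rfl fun H _ => ?_
    rw [uniformModel_real_singleton, likelihoodRatio, ← prod_pow, ← prod_mul_distrib]
  rw [hfactor, sum_filter, Real.exp_sum]
  refine prod_le_prod (fun e _ => sum_nonneg fun b _ =>
    mul_nonneg (sq_nonneg _) (bernoulliMass_nonneg (edgeProb_mem_Icc 0 e) b)) fun e _ => ?_
  simp only [Fintype.sum_bool, edgeProb]
  split_ifs with h
  · calc _ = 1 + (2 * logistic (∑ v ∈ e, θ v) - 1) ^ 2 := by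
          simp [bernoulliMass, logistic_zero]; ring
      _ ≤ 1 + (∑ v ∈ e, θ v) ^ 2 := by
          linarith [sq_two_mul_logistic_sub_one_le (∑ v ∈ e, θ v)]
      _ ≤ _ := by linarith [Real.add_one_le_exp ((∑ v ∈ e, θ v) ^ 2)]
  · simp [bernoulliMass]

end Model

section SignVectors

variable {n : ℕ}

def signVector (η : ℝ) (x : Fin n → Bool) : Fin n → ℝ := fun v => if x v then η else -η

theorem abs_signVector {η : ℝ} (hη : 0 ≤ η) (x : Fin n → Bool) (v : Fin n) :
    |signVector η x v| = η := by
  unfold signVector; split_ifs <;> simp [abs_of_nonneg hη]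

theorem sum_sq_sum_le_of_abs_le {s : ℕ} {θ : Fin n → ℝ} {η : ℝ} (hθ : ∀ v, |θ v| ≤ η) :
    ∑ e : Finset (Fin n) with e.card = s, (∑ v ∈ e, θ v) ^ 2 ≤ (n : ℝ) ^ s * (s * η) ^ 2 := by
  have hterm : ∀ e : Finset (Fin n), e.card = s → (∑ v ∈ e, θ v) ^ 2 ≤ (s * η) ^ 2 := by
    intro e he
    rw [← sq_abs]
    refine pow_le_pow_left₀ (abs_nonneg _) ?_ 2
    calc |∑ v ∈ e, θ v| ≤ ∑ v ∈ e, |θ v| := abs_sum_le_sum_abs _ _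
      _ ≤ ∑ _v ∈ e, η := sum_le_sum fun v _ => hθ v
      _ = s * η := by rw [sum_const, he, nsmul_eq_mul]
  calc ∑ e : Finset (Fin n) with e.card = s, (∑ v ∈ e, θ v) ^ 2
      ≤ #{e : Finset (Fin n) | e.card = s} • (s * η) ^ 2 :=
        sum_le_card_nsmul _ _ _ fun e he => hterm e (mem_filter.1 he).2
    _ ≤ (n : ℝ) ^ s * (s * η) ^ 2 := by
        rw [nsmul_eq_mul, univ_filter_card_eq, card_powersetCard, card_univ, Fintype.card_fin]
        gcongr
        exact_mod_cast Nat.choose_le_pow n s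

theorem supNorm_sub_eq_dist (x y : Fin n → ℝ) : supNorm (fun v => x v - y v) = dist x y := by
  have hle : ∀ v, |x v - y v| ≤ supNorm (fun v => x v - y v) := fun v =>
    le_ciSup (f := fun v => |x v - y v|) (Set.finite_range _).bddAbove v
  refine le_antisymm (Real.iSup_le (fun v => ?_) dist_nonneg) ?_
  · rw [← Real.dist_eq]; exact dist_le_pi_dist x y v
  · exact (dist_pi_le_iff (Real.iSup_nonneg fun v => abs_nonneg _)).2 fun v => by
      rw [Real.dist_eq]; exact hle v

theorem l2norm_sub_eq_dist (x y : Fin n → ℝ) :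
    l2norm (fun v => x v - y v)
      = dist (WithLp.toLp 2 x : EuclideanSpace ℝ (Fin n)) (WithLp.toLp 2 y) := by
  simp [l2norm, EuclideanSpace.dist_eq, Real.dist_eq, sq_abs]

theorem sq_signVector_sub (η : ℝ) (x y : Fin n → Bool) (v : Fin n) :
    (signVector η x v - signVector η y v) ^ 2 = if x v = y v then 0 else 4 * η ^ 2 := by
  unfold signVector
  cases x v <;> cases y v <;> simp <;> ring

theorem sq_dist_toLp_signVector (η : ℝ) (x y : Fin n → Bool) :
    dist (WithLp.toLp 2 (signVector η x) : EuclideanSpace ℝ (Fin n))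
      (WithLp.toLp 2 (signVector η y)) ^ 2 = 4 * η ^ 2 * hammingDist x y := by
  rw [EuclideanSpace.dist_eq, Real.sq_sqrt (by positivity)]
  simp only [Real.dist_eq, sq_abs, sq_signVector_sub]
  rw [sum_ite, sum_const_zero, zero_add, sum_const, nsmul_eq_mul, hammingDist]
  ring

theorem two_mul_le_dist_signVector {η : ℝ} (hη : 0 ≤ η) {x y : Fin n → Bool} (hxy : x ≠ y) :
    2 * η ≤ dist (signVector η x) (signVector η y) := by
  obtain ⟨v, hv⟩ := Function.ne_iff.1 hxy
  have h := sq_signVector_sub η x y v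
  rw [if_neg hv, show 4 * η ^ 2 = (2 * η) ^ 2 by ring] at h
  rw [← Real.sqrt_sq (by positivity : 0 ≤ 2 * η), ← h, Real.sqrt_sq_eq_abs, ← Real.dist_eq]
  exact dist_le_pi_dist _ _ v

end SignVectors

theorem one_sub_le_sSup_of_signVector_packing {n s : ℕ} {M η τ δ : ℝ}
    (N : (Fin n → ℝ) → ℝ) (est : (Finset (Fin n) → Bool) → (Fin n → ℝ))
    (S : Finset (Fin n → Bool)) (hη : 0 ≤ η) (hηM : η ≤ M) (hδ : 0 < δ)
    (hχ : (n : ℝ) ^ s * (s * η) ^ 2 ≤ n / 16) (hS : 4 * Real.exp (n / 16) ≤ δ ^ 2 * #S)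
    (hsep : ∀ x ∈ S, ∀ y ∈ S, x ≠ y → ∀ z : Fin n → ℝ,
      τ ≤ N (fun v => z v - signVector η x v) ∨ τ ≤ N (fun v => z v - signVector η y v)) :
    1 - δ ≤ sSup {r : ℝ | ∃ β : Fin n → ℝ, (∀ v, |β v| ≤ M) ∧
      r = (uniformModel n s β {H | τ ≤ N (fun v => est H v - β v)}).toReal} := by
  have hSne : S.Nonempty := card_pos.1 <| by
    have := Real.exp_pos (n / 16)
    exact_mod_cast pos_of_mul_pos_right (by linarith : 0 < δ ^ 2 * #S) (sq_nonneg δ)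
  let A : (Fin n → Bool) → Set (Finset (Fin n) → Bool) :=
    fun x => {H | N (fun v => est H v - signVector η x v) < τ}
  have hA : (S : Set (Fin n → Bool)).PairwiseDisjoint A := fun x hx y hy hxy =>
    Set.disjoint_left.2 fun H hHx hHy =>
      (hsep x hx y hy hxy (est H)).elim (not_lt.2 · hHx) (not_lt.2 · hHy)
  obtain ⟨x, hx, hfail⟩ := exists_measureReal_le_of_pairwiseDisjoint (uniformModel n s 0)
    (fun x => uniformModel n s (signVector η x)) (fun x => likelihoodRatio s (signVector η x))
    (fun x H => uniformModel_real_singleton_eq_mul _ H) hSne hA hδ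
    (fun x _ => (sum_sq_likelihoodRatio_le _).trans <| Real.exp_le_exp.2 <|
      (sum_sq_sum_le_of_abs_le fun v => (abs_signVector hη x v).le).trans hχ) (by linarith)
  have hbdd : BddAbove {r : ℝ | ∃ β : Fin n → ℝ, (∀ v, |β v| ≤ M) ∧
      r = (uniformModel n s β {H | τ ≤ N (fun v => est H v - β v)}).toReal} :=
    ⟨1, by rintro r ⟨β, -, rfl⟩; exact measureReal_le_one⟩
  refine (le_csSup hbdd
    ⟨signVector η x, fun v => (abs_signVector hη x v).trans_le hηM, rfl⟩).trans' ?_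
  have hcompl : {H | τ ≤ N (fun v => est H v - signVector η x v)} = (A x)ᶜ := by
    ext; simp [A]
  rw [← measureReal_def, hcompl, probReal_compl_eq_one_sub (Set.toFinite _).measurableSet]
  linarith

theorem eventually_four_mul_exp_mul_le {δ : ℝ} (hδ : 0 < δ) :
    ∀ᶠ n : ℕ in atTop, 4 * Real.exp (n / 16) * (5 / 4 * √2) ^ n ≤ δ ^ 2 * 2 ^ n := by
  have hexp : Real.exp (1 / 16) < 16 / 15 := by
    have h := Real.add_one_lt_exp (x := -(1 / 16)) (by norm_num)
    have h' : Real.exp (1 / 16) * Real.exp (-(1 / 16)) = 1 := by rw [← Real.exp_add]; norm_num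
    nlinarith [Real.exp_pos (1 / 16)]
  set ρ := Real.exp (1 / 16) * (5 / 4 * √2) / 2
  have hρ : ρ < 1 := by
    have := Real.sqrt_two_lt_three_halves
    have : Real.exp (1 / 16) * √2 < 16 / 15 * (3 / 2) :=
      mul_lt_mul'' hexp this (by positivity) (by positivity)
    simp only [ρ]; linarith
  have hρn := tendsto_pow_atTop_nhds_zero_of_lt_one (by positivity) hρ
  filter_upwards [(tendsto_order.1 hρn).2 (δ ^ 2 / 4) (by positivity)] with n hn
  have : Real.exp (n / 16) * (5 / 4 * √2) ^ n = ρ ^ n * 2 ^ n := by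
    rw [div_eq_mul_one_div (n : ℝ), Real.exp_nat_mul, ← mul_pow, ← mul_pow]
    simp only [ρ]; ring
  rw [mul_assoc, this]
  nlinarith [pow_pos (two_pos (α := ℝ)) n]

section Scaling

variable {s : ℕ} {c x : ℝ}

theorem sq_rpow_neg_half (hx : 0 < x) (a : ℝ) : (x ^ (-(a / 2))) ^ 2 = (x ^ a)⁻¹ := by
  rw [← Real.rpow_mul_natCast hx.le, show -(a / 2) * ((2 : ℕ) : ℝ) = -a by push_cast; ring,
    Real.rpow_neg hx.le]

theorem rpow_neg_sub_one_half_le_one (hs : 1 ≤ s) (hx : 1 ≤ x) :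
    x ^ (-(((s : ℝ) - 1) / 2)) ≤ 1 :=
  Real.rpow_le_one_of_one_le_of_nonpos hx (by
    have : (1 : ℝ) ≤ s := by exact_mod_cast hs
    linarith)

theorem pow_mul_sq_mul_rpow_le (hc : 0 ≤ c) (hcs : s * c ≤ 1 / 4) (hx : 0 < x) :
    x ^ s * (s * (c * x ^ (-(((s : ℝ) - 1) / 2)))) ^ 2 ≤ x / 16 := by
  have : x ^ s * (s * (c * x ^ (-(((s : ℝ) - 1) / 2)))) ^ 2 = (s * c) ^ 2 * x := by
    rw [mul_pow, mul_pow, sq_rpow_neg_half hx, Real.rpow_sub_one hx.ne', Real.rpow_natCast]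
    field_simp
  rw [this]
  have : (s * c) ^ 2 ≤ 1 / 16 := by nlinarith [mul_nonneg (Nat.cast_nonneg s) hc]
  nlinarith

theorem sq_mul_rpow_neg_sub_two_half (hx : 0 < x) :
    (c * x ^ (-(((s : ℝ) - 2) / 2))) ^ 2 = (c * x ^ (-(((s : ℝ) - 1) / 2))) ^ 2 * x := by
  rw [mul_pow, mul_pow, sq_rpow_neg_half hx, sq_rpow_neg_half hx, Real.rpow_sub hx,
    Real.rpow_sub_one hx.ne', Real.rpow_natCast, Real.rpow_two]
  field_simp

end Scaling

variable {n s : ℕ} {M c δ : ℝ}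

theorem one_sub_le_sSup_l2norm (hs : 1 ≤ s) (hc : 0 ≤ c) (hcM : c ≤ M) (hcs : s * c ≤ 1 / 4)
    (hδ : 0 < δ) (hn : 1 ≤ n)
    (hnum : 4 * Real.exp (n / 16) * (5 / 4 * √2) ^ n ≤ δ ^ 2 * 2 ^ n)
    (est : (Finset (Fin n) → Bool) → (Fin n → ℝ)) :
    1 - δ ≤ sSup {r : ℝ | ∃ β : Fin n → ℝ, (∀ v, |β v| ≤ M) ∧
      r = (uniformModel n s β {H | c / 2 * (n : ℝ) ^ (-(((s : ℝ) - 2) / 2))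
        ≤ l2norm (fun v => est H v - β v)}).toReal} := by
  have hx : (1 : ℝ) ≤ n := by exact_mod_cast hn
  obtain ⟨S, hSdist, hScard⟩ := exists_code_quarter_hammingDist n
  refine one_sub_le_sSup_of_signVector_packing l2norm est S (by positivity)
    ((mul_le_of_le_one_right hc (rpow_neg_sub_one_half_le_one hs hx)).trans hcM) hδ
    (pow_mul_sq_mul_rpow_le hc hcs (by positivity)) ?_ fun x hxS y hyS hxy z => ?_
  · refine le_of_mul_le_mul_right (hnum.trans ?_)
      (by positivity : (0 : ℝ) < (5 / 4 * √2) ^ n)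
    rw [mul_assoc]
    gcongr
  · rw [l2norm_sub_eq_dist, l2norm_sub_eq_dist]
    refine le_dist_or_le_dist ?_ _
    rw [← pow_le_pow_iff_left₀ (by positivity) dist_nonneg two_ne_zero,
      sq_dist_toLp_signVector, ← mul_assoc, mul_div_cancel₀ _ two_ne_zero,
      sq_mul_rpow_neg_sub_two_half (by linarith)]
    have : (n : ℝ) ≤ 4 * hammingDist x y := by exact_mod_cast hSdist x hxS y hyS hxy
    nlinarith [sq_nonneg (c * (n : ℝ) ^ (-(((s : ℝ) - 1) / 2)))]

theorem one_sub_le_sSup_supNorm (hs : 1 ≤ s) (hc : 0 ≤ c) (hcM : c ≤ M) (hcs : s * c ≤ 1 / 4)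
    (hδ : 0 < δ) (hn : 1 ≤ n)
    (hnum : 4 * Real.exp (n / 16) * (5 / 4 * √2) ^ n ≤ δ ^ 2 * 2 ^ n)
    (est : (Finset (Fin n) → Bool) → (Fin n → ℝ)) :
    1 - δ ≤ sSup {r : ℝ | ∃ β : Fin n → ℝ, (∀ v, |β v| ≤ M) ∧
      r = (uniformModel n s β {H | c / 2 * (n : ℝ) ^ (-(((s : ℝ) - 1) / 2))
        ≤ supNorm (fun v => est H v - β v)}).toReal} := by
  have hx : (1 : ℝ) ≤ n := by exact_mod_cast hn
  have hη : 0 ≤ c * (n : ℝ) ^ (-(((s : ℝ) - 1) / 2)) := by positivity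
  refine one_sub_le_sSup_of_signVector_packing supNorm est univ hη
    ((mul_le_of_le_one_right hc (rpow_neg_sub_one_half_le_one hs hx)).trans hcM) hδ
    (pow_mul_sq_mul_rpow_le hc hcs (by positivity)) ?_ fun x _ y _ hxy z => ?_
  · rw [card_univ, Fintype.card_fun, Fintype.card_bool, Fintype.card_fin, Nat.cast_pow,
      Nat.cast_ofNat]
    refine le_trans ?_ hnum
    have : (1 : ℝ) ≤ (5 / 4 * √2) ^ n := one_le_pow₀ (by nlinarith [Real.one_lt_sqrt_two])
    nlinarith [Real.exp_pos (n / 16)]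
  · rw [supNorm_sub_eq_dist, supNorm_sub_eq_dist]
    exact le_dist_or_le_dist (by linarith [two_mul_le_dist_signVector hη hxy]) z

end HypergraphBetaModel

open HypergraphBetaModel

theorem minimax_estimation_lower_bounds_general
    (M : ℝ) (hM : 0 < M)
    (s : ℕ) (hs : 2 ≤ s)
    (δ : ℝ) (hδ0 : 0 < δ) :
    ∃ C > 0, ∃ N : ℕ, ∀ n ≥ N,
      (∀ est : (Finset (Fin n) → Bool) → (Fin n → ℝ),
        1 - δ ≤
          sSup {x : ℝ | ∃ β : Fin n → ℝ, (∀ v, |β v| ≤ M) ∧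
            x = (uniformModel n s β
              {H | C * (n : ℝ) ^ (-(((s : ℝ) - 2) / 2))
                    ≤ l2norm (fun v => est H v - β v)}).toReal})
      ∧ (∀ est : (Finset (Fin n) → Bool) → (Fin n → ℝ),
        1 - δ ≤
          sSup {x : ℝ | ∃ β : Fin n → ℝ, (∀ v, |β v| ≤ M) ∧
            x = (uniformModel n s β
              {H | C * (n : ℝ) ^ (-(((s : ℝ) - 1) / 2))
                    ≤ supNorm (fun v => est H v - β v)}).toReal}) := by
  have hs1 : 1 ≤ s := by omega
  have hs0 : (0 : ℝ) < s := by exact_mod_cast hs1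
  set c := min M (1 / (4 * s))
  have hc : 0 < c := lt_min hM (by positivity)
  have hcs : s * c ≤ 1 / 4 :=
    (mul_le_mul_of_nonneg_left (min_le_right _ _) hs0.le).trans_eq (by field_simp)
  obtain ⟨N, hN⟩ := eventually_atTop.1 (eventually_four_mul_exp_mul_le hδ0)
  refine ⟨c / 2, by positivity, N + 1, fun n hn => ⟨fun est => ?_, fun est => ?_⟩⟩
  · exact one_sub_le_sSup_l2norm hs1 hc.le (min_le_left _ _) hcs hδ0 (by omega)
      (hN n (by omega)) est
  · exact one_sub_le_sSup_supNorm hs1 hc.le (min_le_left _ _) hcs hδ0 (by omega)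
      (hN n (by omega)) est

/-- **Theorem 2.3 (minimax lower bounds for estimation in the `s`-uniform model).**
For any `2 ≤ s ≤ r`, `M > 0` and `δ ∈ (0,1)` there is `C > 0` (depending on `M, r, δ`) such that
for all large `n` and every estimator `β̂`:
(i)  `sup_{β ∈ B(M)} P_β(‖β̂ − β‖₂ ≥ C n^{-(s-2)/2}) ≥ 1 − δ`, and
(ii) `sup_{β ∈ B(M)} P_β(‖β̂ − β‖_∞ ≥ C n^{-(s-1)/2}) ≥ 1 − δ`. -/
theorem minimax_estimation_lower_bounds
    (r : ℕ) (hr : 2 ≤ r) (M : ℝ) (hM : 0 < M)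
    (s : ℕ) (hs : 2 ≤ s) (hsr : s ≤ r)
    (δ : ℝ) (hδ0 : 0 < δ) (hδ1 : δ < 1) :
    ∃ C > 0, ∃ N : ℕ, ∀ n ≥ N,
      (∀ est : (Finset (Fin n) → Bool) → (Fin n → ℝ),
        1 - δ ≤
          sSup {x : ℝ | ∃ β : Fin n → ℝ, (∀ v, |β v| ≤ M) ∧
            x = (uniformModel n s β
              {H | C * (n : ℝ) ^ (-(((s : ℝ) - 2) / 2))
                    ≤ l2norm (fun v => est H v - β v)}).toReal})
      ∧ (∀ est : (Finset (Fin n) → Bool) → (Fin n → ℝ),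
        1 - δ ≤
          sSup {x : ℝ | ∃ β : Fin n → ℝ, (∀ v, |β v| ≤ M) ∧
            x = (uniformModel n s β
              {H | C * (n : ℝ) ^ (-(((s : ℝ) - 1) / 2))
                    ≤ supNorm (fun v => est H v - β v)}).toReal}) :=
  minimax_estimation_lower_bounds_general M hM s hs δ hδ0

end
end

section
/- Fix s ≥ 2, M > 0 and a sequence ε = ε_n > 0, and consider testing H_0 : β_s = γ versus H_1 : ‖β_s − γ‖_∞ ≥ ε from one observation of H_s(n, β_s) with γ, β_s ∈ B(M), with worst-case risk R(ψ_n, γ) = P_γ(ψ_n = 1) + sup{P_{γ'}(ψ_n = 0) : γ' ∈ B(M), ‖γ' − γ‖_∞ ≥ ε}. Then: (a) if ε_n·√(n^{s−1}/log n) → ∞, the test φ^max_{n,s} = 1{‖β̂_s − γ‖_∞ ≥ 2C√(log n/n^{s−1})} (with C = C(s,M) chosen so that ‖β̂_s − κ‖_∞ ≤ C√(log n/n^{s−1}) holds with probability tending to 1 under every κ ∈ B(M)) is asymptotically powerful, i.e., R(φ^max_{n,s}, γ) → 0 for every γ ∈ B(M); (b) if ε_n·n^{(s−1)/2} → 0,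 then every sequence of tests is asymptotically powerless, i.e., there exists γ ∈ B(M) with R(ψ_n, γ) → 1. -/
open MeasureTheory ProbabilityTheory Filter Finset Matrix

noncomputable section

/-- Worst-case testing risk for `H_0 : β_s = γ` vs `H_1 : ‖β_s − γ‖_∞ ≥ ε` in the `s`-uniform
model: the Type I error plus the supremum of the Type II errors over the `L_∞`-separated
alternatives in `B(M)`.  Here `ψ H` means "reject `H_0`". -/
def riskLinf (n s : ℕ) (M ε : ℝ) (ψ : (Finset (Fin n) → Bool) → Prop) (γ : Fin n → ℝ) : ℝ :=
  (uniformModel n s γ {H | ψ H}).toReal +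
    sSup {x : ℝ | ∃ γ' : Fin n → ℝ, (∀ v, |γ' v| ≤ M) ∧
      ε ≤ supNorm (fun v => γ' v - γ v) ∧
      x = (uniformModel n s γ' {H | ¬ ψ H}).toReal}

/-!
(a) On the event that the MLE lies within `r = C √(log n / n^{s-1})` of the true parameter, the
test with threshold `2r` accepts a true null and, by the triangle inequality, rejects every
alternative at distance `ε ≥ 3r`. Consistency is assumed along every sequence in `B(M)`, hence
holds uniformly on `B(M)`, which bounds the supremum over the alternatives.

(b) Moving one coordinate `v₀` of `γ` by `ε` changes only the at most `n^{s-1}` hyperedge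
probabilities through `v₀`, each by at most `ε` (the logistic function is `1`-Lipschitz), while
their variances stay above `c² = logistic (-(s M))²`. The `χ²` divergence of the two product laws is
therefore at most `exp (n^{s-1} ε² / c²) - 1 → 0`, so no test tells them apart. Choosing the null
to nearly minimise the rejection probability over `B(M)` keeps the risk at most `1 + o(1)`.
-/

lemma logistic_eq_sigmoid : logistic = Real.sigmoid := by
  funext x
  have := (Real.exp_pos x).ne'
  rw [logistic, Real.sigmoid_def, Real.exp_neg]
  field_simp
  ring

lemma logistic_pos (x : ℝ) : 0 < logistic x := logistic_eq_sigmoid ▸ Real.sigmoid_pos x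

lemma logistic_lt_one (x : ℝ) : logistic x < 1 := logistic_eq_sigmoid ▸ Real.sigmoid_lt_one x

lemma logistic_monotone : Monotone logistic := logistic_eq_sigmoid ▸ Real.sigmoid_monotone

lemma one_sub_logistic (x : ℝ) : 1 - logistic x = logistic (-x) := by
  rw [logistic_eq_sigmoid, Real.sigmoid_neg]

lemma lipschitzWith_logistic : LipschitzWith 1 logistic := by
  rw [logistic_eq_sigmoid]
  refine lipschitzWith_of_nnnorm_deriv_le differentiable_sigmoid fun x => ?_
  rw [Real.deriv_sigmoid, ← NNReal.coe_le_coe, coe_nnnorm, NNReal.coe_one, Real.norm_eq_abs,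
    abs_le]
  have h0 := Real.sigmoid_pos x
  have h1 := Real.sigmoid_lt_one x
  constructor <;> nlinarith

lemma abs_logistic_sub_le (a b : ℝ) : |logistic a - logistic b| ≤ |a - b| := by
  simpa [Real.dist_eq] using lipschitzWith_logistic.dist_le_mul a b

lemma sq_logistic_neg_le {a b : ℝ} (hab : |a| ≤ b) :
    logistic (-b) ^ 2 ≤ logistic a * (1 - logistic a) := by
  rw [one_sub_logistic, sq]
  obtain ⟨h₁, h₂⟩ := abs_le.1 hab
  exact mul_le_mul (logistic_monotone h₁) (logistic_monotone (neg_le_neg h₂))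
    (logistic_pos _).le (logistic_pos a).le

lemma supNorm_eq_norm {n : ℕ} (x : Fin n → ℝ) : supNorm x = ‖x‖ :=
  le_antisymm (Real.iSup_le (fun v => norm_le_pi_norm x v) (norm_nonneg x))
    ((pi_norm_le_iff_of_nonneg (Real.iSup_nonneg fun v => abs_nonneg (x v))).2 fun v =>
      le_ciSup (Set.finite_range fun v => |x v|).bddAbove v)

/-- `∑ f²/g - 1` is the `χ²` divergence of `f` from `g`; the bound is Cauchy–Schwarz with
weights `g`. -/
lemma sq_sum_abs_sub_le_chiSq {α : Type*} (s : Finset α) {f g : α → ℝ}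
    (hg : ∀ a ∈ s, 0 ≤ g a) (hf₁ : ∑ a ∈ s, f a = 1) (hg₁ : ∑ a ∈ s, g a = 1)
    (hfg : ∀ a ∈ s, g a = 0 → f a = 0) :
    (∑ a ∈ s, |f a - g a|) ^ 2 ≤ ∑ a ∈ s, f a ^ 2 / g a - 1 := by
  have hsplit : ∀ a ∈ s, |f a - g a| = |f a - g a| / √(g a) * √(g a) := fun a ha => by
    rcases (hg a ha).eq_or_lt with h | h
    · simp [← h, hfg a ha h.symm]
    · exact (div_mul_cancel₀ _ (Real.sqrt_pos.2 h).ne').symm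
  have hterm : ∀ a ∈ s, (|f a - g a| / √(g a)) ^ 2 = f a ^ 2 / g a - 2 * f a + g a := by
    intro a ha
    rw [div_pow, sq_abs, Real.sq_sqrt (hg a ha)]
    rcases (hg a ha).eq_or_lt with h | h
    · simp [← h, hfg a ha h.symm]
    · field_simp
      ring
  calc (∑ a ∈ s, |f a - g a|) ^ 2
      = (∑ a ∈ s, |f a - g a| / √(g a) * √(g a)) ^ 2 := by rw [sum_congr rfl hsplit]
    _ ≤ (∑ a ∈ s, (|f a - g a| / √(g a)) ^ 2) * ∑ a ∈ s, √(g a) ^ 2 :=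
        sum_mul_sq_le_sq_mul_sq _ _ _
    _ = ∑ a ∈ s, f a ^ 2 / g a - 1 := by
        rw [sum_congr rfl hterm, sum_congr rfl fun a ha => Real.sq_sqrt (hg a ha), hg₁,
          sum_add_distrib, sum_sub_distrib, ← mul_sum, hf₁, hg₁]
        ring

-- At `q = 0` both sides are `1` only because `0 / 0 = 0`.
lemma sq_div_add_sq_div_one_sub {p q : ℝ} (hq : q < 1) (hpq : q = 0 → p = 0) :
    p ^ 2 / q + (1 - p) ^ 2 / (1 - q) = 1 + (p - q) ^ 2 / (q * (1 - q)) := by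
  rcases eq_or_ne q 0 with rfl | hq₀
  · simp [hpq rfl]
  · have : 1 - q ≠ 0 := by linarith
    field_simp
    ring

lemma bernoulliBool_singleton (p : ℝ) (b : Bool) :
    bernoulliBool p {b} = ENNReal.ofReal (if b then p else 1 - p) := by
  cases b <;> simp [bernoulliBool]

lemma isProbabilityMeasure_bernoulliBool {p : ℝ} (hp₀ : 0 ≤ p) (hp₁ : p ≤ 1) :
    IsProbabilityMeasure (bernoulliBool p) := by
  constructor
  simp [bernoulliBool, ← ENNReal.ofReal_add hp₀ (sub_nonneg.2 hp₁)]

section ProductBernoulli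

variable {ι : Type*} [Fintype ι]

def bernoulliWeight (p : ι → ℝ) (ω : ι → Bool) : ℝ := ∏ i, if ω i then p i else 1 - p i

lemma bernoulliWeight_nonneg {p : ι → ℝ} (hp₀ : ∀ i, 0 ≤ p i) (hp₁ : ∀ i, p i ≤ 1)
    (ω : ι → Bool) : 0 ≤ bernoulliWeight p ω :=
  prod_nonneg fun i _ => by split <;> linarith [hp₀ i, hp₁ i]

lemma bernoulliWeight_eq_zero_of {p q : ι → ℝ} (hq₁ : ∀ i, q i < 1)
    (hpq : ∀ i, q i = 0 → p i = 0) {ω : ι → Bool} (hω : bernoulliWeight q ω = 0) :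
    bernoulliWeight p ω = 0 := by
  obtain ⟨i, -, hi⟩ := prod_eq_zero_iff.1 hω
  refine prod_eq_zero (mem_univ i) ?_
  cases h : ω i <;> simp only [h, if_true, Bool.false_eq_true, if_false] at hi ⊢
  · linarith [hq₁ i]
  · exact hpq i hi

variable [DecidableEq ι]

lemma sum_bernoulliWeight (p : ι → ℝ) : ∑ ω, bernoulliWeight p ω = 1 := by
  calc ∑ ω, bernoulliWeight p ω = ∏ i, ∑ b : Bool, if b then p i else 1 - p i := by
        rw [prod_univ_sum, Fintype.piFinset_univ]; rfl
    _ = 1 := by simp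

lemma measureReal_pi_bernoulliBool {p : ι → ℝ} (hp₀ : ∀ i, 0 ≤ p i) (hp₁ : ∀ i, p i ≤ 1)
    (A : Set (ι → Bool)) :
    (Measure.pi fun i => bernoulliBool (p i)).real A = ∑ ω, A.indicator (bernoulliWeight p) ω := by
  classical
  have hA : ((univ.filter (· ∈ A) : Finset _) : Set (ι → Bool)) = A := by ext; simp
  rw [sum_indicator_eq_sum_filter, ← hA, ← sum_measureReal_singleton, hA]
  refine sum_congr rfl fun ω _ => ?_
  rw [measureReal_def, Measure.pi_singleton, bernoulliWeight, ENNReal.toReal_prod]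
  refine prod_congr rfl fun i _ => ?_
  rw [bernoulliBool_singleton, ENNReal.toReal_ofReal]
  split <;> linarith [hp₀ i, hp₁ i]

lemma sum_sq_bernoulliWeight_div {p q : ι → ℝ} (hq₁ : ∀ i, q i < 1)
    (hpq : ∀ i, q i = 0 → p i = 0) :
    ∑ ω, bernoulliWeight p ω ^ 2 / bernoulliWeight q ω
      = ∏ i, (1 + (p i - q i) ^ 2 / (q i * (1 - q i))) := by
  calc ∑ ω, bernoulliWeight p ω ^ 2 / bernoulliWeight q ω
      = ∑ ω : ι → Bool,
          ∏ i, (if ω i then p i else 1 - p i) ^ 2 / (if ω i then q i else 1 - q i) := by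
        simp only [bernoulliWeight, ← prod_pow, ← prod_div_distrib]
    _ = ∏ i, ∑ b : Bool, (if b then p i else 1 - p i) ^ 2 / (if b then q i else 1 - q i) := by
        rw [prod_univ_sum, Fintype.piFinset_univ]
    _ = ∏ i, (1 + (p i - q i) ^ 2 / (q i * (1 - q i))) :=
        prod_congr rfl fun i _ => by
          simpa [add_comm] using sq_div_add_sq_div_one_sub (hq₁ i) (hpq i)

lemma abs_measureReal_pi_bernoulliBool_sub_le {p q : ι → ℝ} (hp₀ : ∀ i, 0 ≤ p i)
    (hp₁ : ∀ i, p i ≤ 1) (hq₀ : ∀ i, 0 ≤ q i) (hq₁ : ∀ i, q i ≤ 1) (A : Set (ι → Bool)) :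
    |(Measure.pi fun i => bernoulliBool (p i)).real A
        - (Measure.pi fun i => bernoulliBool (q i)).real A|
      ≤ ∑ ω, |bernoulliWeight p ω - bernoulliWeight q ω| := by
  rw [measureReal_pi_bernoulliBool hp₀ hp₁, measureReal_pi_bernoulliBool hq₀ hq₁,
    ← sum_sub_distrib]
  refine (abs_sum_le_sum_abs _ _).trans (sum_le_sum fun ω _ => ?_)
  by_cases h : ω ∈ A <;> simp [h]

/-- The `χ²` divergence of a product law is `∏ (1 + χ²ᵢ) - 1`. -/
theorem abs_measureReal_pi_bernoulliBool_sub_le_sqrt {p q : ι → ℝ} (hp₀ : ∀ i, 0 ≤ p i)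
    (hp₁ : ∀ i, p i ≤ 1) (hq₀ : ∀ i, 0 ≤ q i) (hq₁ : ∀ i, q i < 1)
    (hpq : ∀ i, q i = 0 → p i = 0) (A : Set (ι → Bool)) :
    |(Measure.pi fun i => bernoulliBool (p i)).real A
        - (Measure.pi fun i => bernoulliBool (q i)).real A|
      ≤ √(∏ i, (1 + (p i - q i) ^ 2 / (q i * (1 - q i))) - 1) := by
  refine (abs_measureReal_pi_bernoulliBool_sub_le hp₀ hp₁ hq₀ (fun i => (hq₁ i).le) A).trans
    (Real.le_sqrt_of_sq_le ?_)
  rw [← sum_sq_bernoulliWeight_div hq₁ hpq]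
  exact sq_sum_abs_sub_le_chiSq univ (fun ω _ => bernoulliWeight_nonneg hq₀
    (fun i => (hq₁ i).le) ω) (sum_bernoulliWeight p) (sum_bernoulliWeight q)
    (fun ω _ => bernoulliWeight_eq_zero_of hq₁ hpq)

end ProductBernoulli

lemma card_filter_card_eq_and_mem_le {α : Type*} [Fintype α] [DecidableEq α] (s : ℕ) (v : α) :
    #{e : Finset α | e.card = s ∧ v ∈ e} ≤ Fintype.card α ^ (s - 1) := by
  have hsub : ({e : Finset α | e.card = s ∧ v ∈ e} : Finset (Finset α))
      ⊆ (powersetCard (s - 1) univ).image (insert v) := by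
    intro e he
    obtain ⟨hcard, hv⟩ := (mem_filter.1 he).2
    exact mem_image.2 ⟨e.erase v, mem_powersetCard.2 ⟨subset_univ _, by
      rw [card_erase_of_mem hv, hcard]⟩, insert_erase hv⟩
  calc #{e : Finset α | e.card = s ∧ v ∈ e} ≤ #((powersetCard (s - 1) univ).image (insert v)) :=
        card_le_card hsub
    _ ≤ (Fintype.card α).choose (s - 1) := by
        simpa using card_image_le (s := powersetCard (s - 1) univ) (f := insert v)
    _ ≤ Fintype.card α ^ (s - 1) := Nat.choose_le_pow _ _

def edgeProb (n s : ℕ) (β : Fin n → ℝ) (e : Finset (Fin n)) : ℝ :=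
  if e.card = s then logistic (∑ v ∈ e, β v) else 0

section UniformModel

variable {n s : ℕ}

lemma edgeProb_nonneg (β : Fin n → ℝ) (e : Finset (Fin n)) : 0 ≤ edgeProb n s β e := by
  unfold edgeProb; split
  · exact (logistic_pos _).le
  · rfl

lemma edgeProb_lt_one (β : Fin n → ℝ) (e : Finset (Fin n)) : edgeProb n s β e < 1 := by
  unfold edgeProb; split
  · exact logistic_lt_one _
  · exact one_pos

lemma edgeProb_eq_zero_of (β β' : Fin n → ℝ) {e : Finset (Fin n)} (h : edgeProb n s β e = 0) :
    edgeProb n s β' e = 0 := by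
  unfold edgeProb at h ⊢
  by_cases hcard : e.card = s
  · simp only [hcard, if_true] at h
    exact absurd h (logistic_pos _).ne'
  · simp [hcard]

instance isProbabilityMeasure_uniformModel (β : Fin n → ℝ) :
    IsProbabilityMeasure (uniformModel n s β) := by
  have (e : Finset (Fin n)) : IsProbabilityMeasure (bernoulliBool (edgeProb n s β e)) :=
    isProbabilityMeasure_bernoulliBool (edgeProb_nonneg β e) (edgeProb_lt_one β e).le
  exact Measure.pi.instIsProbabilityMeasure (fun e => bernoulliBool (edgeProb n s β e))

lemma uniformModel_setOf_not (β : Fin n → ℝ) (q : (Finset (Fin n) → Bool) → Prop) :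
    (uniformModel n s β {H | ¬ q H}).toReal = 1 - (uniformModel n s β {H | q H}).toReal :=
  probReal_compl_eq_one_sub (Set.toFinite _).measurableSet

/-- The numerator is controlled by the `1`-Lipschitz logistic function, the denominator is at least
`logistic (-(s M))²` because `|∑_{v ∈ e} γ v| ≤ s M`. -/
lemma chiSq_edgeProb_update_le {M t : ℝ} {γ γ' : Fin n → ℝ} {v₀ : Fin n}
    (hγ : ∀ v, |γ v| ≤ M) (hγ' : ∀ v, v ≠ v₀ → γ' v = γ v) (ht : |γ' v₀ - γ v₀| ≤ t)
    (e : Finset (Fin n)) :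
    (edgeProb n s γ' e - edgeProb n s γ e) ^ 2 / (edgeProb n s γ e * (1 - edgeProb n s γ e))
      ≤ if e.card = s ∧ v₀ ∈ e then t ^ 2 / logistic (-(s * M)) ^ 2 else 0 := by
  unfold edgeProb
  by_cases hcard : e.card = s
  swap
  · simp [hcard]
  by_cases hv₀ : v₀ ∈ e
  swap
  · have : ∑ v ∈ e, γ' v = ∑ v ∈ e, γ v :=
      sum_congr rfl fun v hv => hγ' v fun h => hv₀ (h ▸ hv)
    simp [hcard, hv₀, this]
  have hsum : ∑ v ∈ e, γ' v - ∑ v ∈ e, γ v = γ' v₀ - γ v₀ := by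
    rw [← sum_sub_distrib, sum_eq_single_of_mem v₀ hv₀ fun v _ hv => by rw [hγ' v hv, sub_self]]
  have hbox : |∑ v ∈ e, γ v| ≤ s * M := by
    calc |∑ v ∈ e, γ v| ≤ ∑ v ∈ e, |γ v| := abs_sum_le_sum_abs _ _
      _ ≤ e.card • M := sum_le_card_nsmul _ _ _ fun v _ => hγ v
      _ = s * M := by rw [hcard, nsmul_eq_mul]
  have hnum : (logistic (∑ v ∈ e, γ' v) - logistic (∑ v ∈ e, γ v)) ^ 2 ≤ t ^ 2 := by
    rw [← sq_abs]
    have := (abs_logistic_sub_le _ _).trans (hsum ▸ ht)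
    exact pow_le_pow_left₀ (abs_nonneg _) this 2
  simp only [hcard, hv₀, and_self, if_true]
  exact div_le_div₀ (sq_nonneg t) hnum (pow_pos (logistic_pos _) 2) (sq_logistic_neg_le hbox)

theorem abs_uniformModel_sub_le_of_update {M t : ℝ} {γ γ' : Fin n → ℝ} {v₀ : Fin n}
    (hγ : ∀ v, |γ v| ≤ M) (hγ' : ∀ v, v ≠ v₀ → γ' v = γ v) (ht : |γ' v₀ - γ v₀| ≤ t)
    (A : Set (Finset (Fin n) → Bool)) :
    |(uniformModel n s γ' A).toReal - (uniformModel n s γ A).toReal|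
      ≤ √(Real.exp ((n : ℝ) ^ (s - 1) * t ^ 2 / logistic (-(s * M)) ^ 2) - 1) := by
  set r : Finset (Fin n) → ℝ := fun e => (edgeProb n s γ' e - edgeProb n s γ e) ^ 2 /
    (edgeProb n s γ e * (1 - edgeProb n s γ e))
  have hr₀ : ∀ e, 0 ≤ r e := fun e => div_nonneg (sq_nonneg _)
    (mul_nonneg (edgeProb_nonneg γ e) (sub_nonneg.2 (edgeProb_lt_one γ e).le))
  have hsum : ∑ e, r e ≤ (n : ℝ) ^ (s - 1) * t ^ 2 / logistic (-(s * M)) ^ 2 := by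
    have hcount : (#{e : Finset (Fin n) | e.card = s ∧ v₀ ∈ e} : ℝ) ≤ (n : ℝ) ^ (s - 1) := by
      exact_mod_cast (card_filter_card_eq_and_mem_le s v₀).trans_eq (by rw [Fintype.card_fin])
    calc ∑ e, r e
        ≤ ∑ e : Finset (Fin n),
            if e.card = s ∧ v₀ ∈ e then t ^ 2 / logistic (-(s * M)) ^ 2 else 0 :=
          sum_le_sum fun e _ => chiSq_edgeProb_update_le hγ hγ' ht e
      _ = #{e : Finset (Fin n) | e.card = s ∧ v₀ ∈ e} * (t ^ 2 / logistic (-(s * M)) ^ 2) := by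
          rw [sum_ite, sum_const_zero, add_zero, sum_const, nsmul_eq_mul]
      _ ≤ (n : ℝ) ^ (s - 1) * (t ^ 2 / logistic (-(s * M)) ^ 2) := by gcongr
      _ = (n : ℝ) ^ (s - 1) * t ^ 2 / logistic (-(s * M)) ^ 2 := by ring
  have hprod : ∏ e, (1 + r e) ≤ Real.exp ((n : ℝ) ^ (s - 1) * t ^ 2 / logistic (-(s * M)) ^ 2) :=
    calc ∏ e, (1 + r e) ≤ ∏ e, Real.exp (r e) :=
          prod_le_prod (fun e _ => by linarith [hr₀ e]) fun e _ => by
            linarith [Real.add_one_le_exp (r e)]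
      _ = Real.exp (∑ e, r e) := (Real.exp_sum _ _).symm
      _ ≤ _ := Real.exp_le_exp.2 hsum
  exact (abs_measureReal_pi_bernoulliBool_sub_le_sqrt (edgeProb_nonneg γ')
    (fun e => (edgeProb_lt_one γ' e).le) (edgeProb_nonneg γ) (edgeProb_lt_one γ)
    (fun e => edgeProb_eq_zero_of γ γ') A).trans (Real.sqrt_le_sqrt (by linarith))

end UniformModel

lemma exists_forall_le_add {α : Type*} {S : Set α} (f : α → ℝ) (hS : S.Nonempty)
    (hf : BddAbove (f '' S)) {δ : ℝ} (hδ : 0 < δ) : ∃ x ∈ S, ∀ y ∈ S, f y ≤ f x + δ := by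
  obtain ⟨_, ⟨x, hx, rfl⟩, hlt⟩ :=
    exists_lt_of_lt_csSup (hS.image f) (sub_lt_self (sSup (f '' S)) hδ)
  exact ⟨x, hx, fun y hy => by linarith [le_csSup hf (Set.mem_image_of_mem f hy)]⟩

lemma exists_abs_eq_abs_add_le {a M ε : ℝ} (ha : |a| ≤ M) (hε₀ : 0 ≤ ε) (hεM : ε ≤ M) :
    ∃ t, |t| = ε ∧ |a + t| ≤ M := by
  obtain ⟨h₁, h₂⟩ := abs_le.1 ha
  rcases le_total a 0 with h | h
  · exact ⟨ε, abs_of_nonneg hε₀, abs_le.2 ⟨by linarith, by linarith⟩⟩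
  · exact ⟨-ε, by rw [abs_neg, abs_of_nonneg hε₀], abs_le.2 ⟨by linarith, by linarith⟩⟩

section Risk

variable {n s : ℕ} {M ε : ℝ} {ψ : (Finset (Fin n) → Bool) → Prop} {γ : Fin n → ℝ}

lemma riskLinf_nonneg : 0 ≤ riskLinf n s M ε ψ γ := by
  refine add_nonneg measureReal_nonneg (Real.sSup_nonneg ?_)
  rintro _ ⟨_, _, _, rfl⟩
  exact measureReal_nonneg

lemma riskLinf_le {a b : ℝ} (hI : (uniformModel n s γ {H | ψ H}).toReal ≤ a)
    (hII : ∀ γ' : Fin n → ℝ, (∀ v, |γ' v| ≤ M) → ε ≤ ‖γ' - γ‖ →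
      (uniformModel n s γ' {H | ¬ ψ H}).toReal ≤ b) (hb : 0 ≤ b) :
    riskLinf n s M ε ψ γ ≤ a + b := by
  refine add_le_add hI (Real.sSup_le ?_ hb)
  rintro _ ⟨γ', hγ', hsep, rfl⟩
  exact hII γ' hγ' (by rwa [supNorm_eq_norm] at hsep)

lemma add_le_riskLinf {γ' : Fin n → ℝ} (hγ' : ∀ v, |γ' v| ≤ M) (hsep : ε ≤ ‖γ' - γ‖) :
    (uniformModel n s γ {H | ψ H}).toReal + (uniformModel n s γ' {H | ¬ ψ H}).toReal
      ≤ riskLinf n s M ε ψ γ := by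
  rw [riskLinf]
  gcongr
  refine le_csSup ⟨1, ?_⟩ ⟨γ', hγ', by rwa [supNorm_eq_norm], rfl⟩
  rintro _ ⟨_, _, _, rfl⟩
  exact measureReal_le_one

theorem riskLinf_supNormTest_le {r δ : ℝ} (hr : 0 < r) (hε : 3 * r ≤ ε)
    (b : (Finset (Fin n) → Bool) → Fin n → ℝ)
    (hδ : ∀ κ : Fin n → ℝ, (∀ v, |κ v| ≤ M) →
      (uniformModel n s κ {H | ¬ supNorm (fun v => b H v - κ v) ≤ r}).toReal ≤ δ)
    (hγ : ∀ v, |γ v| ≤ M) :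
    riskLinf n s M ε (fun H => 2 * r ≤ supNorm (fun v => b H v - γ v)) γ ≤ δ + δ := by
  simp only [supNorm_eq_norm] at hδ ⊢
  have hI : {H | 2 * r ≤ ‖b H - γ‖} ⊆ {H | ¬ ‖b H - γ‖ ≤ r} := fun H hH hgood => by
    linarith [show 2 * r ≤ ‖b H - γ‖ from hH]
  have hII : ∀ γ' : Fin n → ℝ, ε ≤ ‖γ' - γ‖ →
      {H | ¬ 2 * r ≤ ‖b H - γ‖} ⊆ {H | ¬ ‖b H - γ'‖ ≤ r} := fun γ' hsep H hH hgood => by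
    have := norm_sub_le_norm_sub_add_norm_sub γ' (b H) γ
    rw [norm_sub_rev γ' (b H)] at this
    exact hH (by linarith)
  exact riskLinf_le ((measureReal_mono hI).trans (hδ γ hγ))
    (fun γ' hγ' hsep => (measureReal_mono (hII γ' hsep)).trans (hδ γ' hγ'))
    (measureReal_nonneg.trans (hδ γ hγ))

theorem one_sub_le_riskLinf (hγ : ∀ v, |γ v| ≤ M) (v₀ : Fin n) (hε₀ : 0 ≤ ε) (hεM : ε ≤ M) :
    1 - √(Real.exp ((n : ℝ) ^ (s - 1) * ε ^ 2 / logistic (-(s * M)) ^ 2) - 1)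
      ≤ riskLinf n s M ε ψ γ := by
  obtain ⟨t, ht, htM⟩ := exists_abs_eq_abs_add_le (hγ v₀) hε₀ hεM
  set γ' := Function.update γ v₀ (γ v₀ + t)
  have hγ'v₀ : γ' v₀ - γ v₀ = t := by simp [γ']
  have hγ'M : ∀ v, |γ' v| ≤ M := fun v => by
    rcases eq_or_ne v v₀ with rfl | hv
    · simpa [γ'] using htM
    · simpa [γ', hv] using hγ v
  have hsep : ε ≤ ‖γ' - γ‖ := by
    simpa [← ht, ← hγ'v₀] using norm_le_pi_norm (γ' - γ) v₀
  have hTV := abs_uniformModel_sub_le_of_update (s := s) hγ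
    (fun v hv => Function.update_of_ne hv _ _) (hγ'v₀ ▸ ht.le) {H | ψ H}
  have hrisk := add_le_riskLinf (s := s) (ψ := ψ) hγ'M hsep
  rw [uniformModel_setOf_not] at hrisk
  linarith [(abs_le.1 hTV).2]

end Risk

lemma tendsto_zero_of_tendsto_mul_rpow {ε : ℕ → ℝ} {a : ℝ} (ha : 0 ≤ a) (hε : ∀ n, 0 ≤ ε n)
    (h : Tendsto (fun n : ℕ => ε n * (n : ℝ) ^ a) atTop (nhds 0)) :
    Tendsto ε atTop (nhds 0) := by
  refine tendsto_of_tendsto_of_tendsto_of_le_of_le' tendsto_const_nhds h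
    (Eventually.of_forall hε) ?_
  filter_upwards [eventually_ge_atTop 1] with n hn
  exact le_mul_of_one_le_right (hε n) (Real.one_le_rpow (by exact_mod_cast hn) ha)

lemma tendsto_sqrt_exp_sub_one {s : ℕ} (hs : 1 ≤ s) {ε : ℕ → ℝ} (c : ℝ)
    (h : Tendsto (fun n : ℕ => ε n * (n : ℝ) ^ (((s : ℝ) - 1) / 2)) atTop (nhds 0)) :
    Tendsto (fun n : ℕ => √(Real.exp ((n : ℝ) ^ (s - 1) * ε n ^ 2 / c) - 1)) atTop (nhds 0) := by
  have hpow : ∀ n : ℕ, (n : ℝ) ^ (s - 1) = ((n : ℝ) ^ (((s : ℝ) - 1) / 2)) ^ 2 := fun n => by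
    rw [← Real.rpow_mul_natCast n.cast_nonneg, ← Real.rpow_natCast, Nat.cast_sub hs]
    norm_num
  have hcont : Continuous fun x : ℝ => √(Real.exp (x ^ 2 / c) - 1) := by fun_prop
  simpa [Function.comp_def, hpow, mul_pow, mul_comm] using (hcont.tendsto 0).comp h

theorem tendsto_riskLinf_supNormTest (s : ℕ) (M : ℝ) (ε : ℕ → ℝ)
    (mle : (n : ℕ) → (Finset (Fin n) → Bool) → Fin n → ℝ) {C : ℝ} (hC : 0 < C)
    (hmle : ∀ κ : (n : ℕ) → Fin n → ℝ, (∀ n, ∀ v : Fin n, |κ n v| ≤ M) →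
      Tendsto (fun n =>
        (uniformModel n s (κ n)
          {H | supNorm (fun v => mle n H v - κ n v)
                ≤ C * √(Real.log n / (n : ℝ) ^ (s - 1))}).toReal) atTop (nhds 1))
    (hε : Tendsto (fun n : ℕ => ε n * √((n : ℝ) ^ (s - 1) / Real.log n)) atTop atTop)
    (γ : (n : ℕ) → Fin n → ℝ) (hγ : ∀ n, ∀ v : Fin n, |γ n v| ≤ M) :
    Tendsto (fun n =>
      riskLinf n s M (ε n)
        (fun H => 2 * C * √(Real.log n / (n : ℝ) ^ (s - 1))
                    ≤ supNorm (fun v => mle n H v - γ n v))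
        (γ n)) atTop (nhds 0) := by
  set r : ℕ → ℝ := fun n => C * √(Real.log n / (n : ℝ) ^ (s - 1))
  set f : (n : ℕ) → (Fin n → ℝ) → ℝ := fun n κ =>
    (uniformModel n s κ {H | ¬ supNorm (fun v => mle n H v - κ v) ≤ r n}).toReal
  have hf : ∀ κ : (n : ℕ) → Fin n → ℝ, (∀ n v, |κ n v| ≤ M) →
      Tendsto (fun n => f n (κ n)) atTop (nhds 0) := fun κ hκ => by
    refine (sub_self (1 : ℝ) ▸ (hmle κ hκ).const_sub 1).congr fun n => ?_
    exact (uniformModel_setOf_not _ _).symm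
  choose κ hκ hκmax using fun n => exists_forall_le_add (S := {κ : Fin n → ℝ | ∀ v, |κ v| ≤ M})
    (f n) ⟨γ n, hγ n⟩ ⟨1, by rintro _ ⟨_, _, rfl⟩; exact measureReal_le_one⟩
    (Nat.one_div_pos_of_nat (n := n))
  set δ : ℕ → ℝ := fun n => f n (κ n) + 1 / (n + 1)
  have hδ : Tendsto (fun n => δ n + δ n) atTop (nhds 0) := by
    have := (hf κ hκ).add tendsto_one_div_add_atTop_nhds_zero_nat
    rw [add_zero] at this
    simpa only [add_zero] using this.add this
  refine tendsto_of_tendsto_of_tendsto_of_le_of_le' tendsto_const_nhds hδ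
    (Eventually.of_forall fun n => riskLinf_nonneg) ?_
  filter_upwards [hε.eventually_ge_atTop (3 * C)] with n hn
  have hX : 0 < √((n : ℝ) ^ (s - 1) / Real.log n) := by
    refine (Real.sqrt_nonneg _).lt_of_ne fun h => ?_
    rw [← h, mul_zero] at hn
    linarith
  have hr : r n = C / √((n : ℝ) ^ (s - 1) / Real.log n) := by
    rw [div_eq_mul_inv, ← Real.sqrt_inv, inv_div]
  rw [mul_assoc]
  refine riskLinf_supNormTest_le (r := r n) (by rw [hr]; positivity) ?_ (mle n) (hκmax n) (hγ n)
  rw [hr, mul_div_assoc', div_le_iff₀ hX]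
  exact hn

theorem exists_tendsto_riskLinf_one (s : ℕ) (hs : 1 ≤ s) (M : ℝ) (hM : 0 < M) (ε : ℕ → ℝ)
    (hε : ∀ n, 0 < ε n)
    (hεs : Tendsto (fun n : ℕ => ε n * (n : ℝ) ^ (((s : ℝ) - 1) / 2)) atTop (nhds 0))
    (ψ : (n : ℕ) → (Finset (Fin n) → Bool) → Prop) :
    ∃ γ : (n : ℕ) → Fin n → ℝ, (∀ n, ∀ v : Fin n, |γ n v| ≤ M) ∧
      Tendsto (fun n => riskLinf n s M (ε n) (ψ n) (γ n)) atTop (nhds 1) := by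
  set P : (n : ℕ) → (Fin n → ℝ) → ℝ := fun n κ => (uniformModel n s κ {H | ψ n H}).toReal
  choose γ hγ hγmin using fun n => exists_forall_le_add (S := {κ : Fin n → ℝ | ∀ v, |κ v| ≤ M})
    (fun κ => -P n κ) ⟨0, fun v => by simpa using hM.le⟩
    ⟨0, by rintro _ ⟨_, _, rfl⟩; exact neg_nonpos.2 measureReal_nonneg⟩
    (Nat.one_div_pos_of_nat (n := n))
  have hεM : ∀ᶠ n in atTop, ε n ≤ M :=
    (tendsto_zero_of_tendsto_mul_rpow (by linarith [(Nat.one_le_cast (α := ℝ)).2 hs])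
      (fun n => (hε n).le) hεs).eventually (eventually_le_nhds hM)
  have hlow : Tendsto (fun n : ℕ =>
      1 - √(Real.exp ((n : ℝ) ^ (s - 1) * ε n ^ 2 / logistic (-(s * M)) ^ 2) - 1))
      atTop (nhds 1) := by
    simpa only [sub_zero] using (tendsto_sqrt_exp_sub_one hs _ hεs).const_sub 1
  have hup : Tendsto (fun n : ℕ => 1 + 1 / ((n : ℝ) + 1)) atTop (nhds 1) := by
    simpa only [add_zero] using tendsto_one_div_add_atTop_nhds_zero_nat.const_add (1 : ℝ)
  refine ⟨γ, hγ, tendsto_of_tendsto_of_tendsto_of_le_of_le' hlow hup ?_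
    (Eventually.of_forall fun n => ?_)⟩
  · filter_upwards [eventually_ge_atTop 1, hεM] with n hn hεMn
    exact one_sub_le_riskLinf (hγ n) ⟨0, hn⟩ (hε n).le hεMn
  · have hP : P n (γ n) ≤ 1 := measureReal_le_one
    have := riskLinf_le (ε := ε n) (ψ := ψ n) (a := P n (γ n))
      (b := 1 - P n (γ n) + 1 / (n + 1)) le_rfl
      (fun γ' hγ' _ => by
        rw [uniformModel_setOf_not]
        linarith [hγmin n γ' hγ'])
      (by linarith [Nat.one_div_pos_of_nat (α := ℝ) (n := n)])
    linarith

theorem minimax_testing_Linf_general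
    (s : ℕ) (hs : 2 ≤ s) (M : ℝ) (hM : 0 < M)
    (ε : ℕ → ℝ) (hε : ∀ n, 0 < ε n)
    (mle : (n : ℕ) → (Finset (Fin n) → Bool) → Fin n → ℝ) :
    -- (a) the sup-norm test is asymptotically powerful above the threshold
    (∀ C : ℝ, 0 < C →
      (∀ κ : (n : ℕ) → Fin n → ℝ, (∀ n, ∀ v : Fin n, |κ n v| ≤ M) →
        Tendsto (fun n =>
          (uniformModel n s (κ n)
            {H | supNorm (fun v => mle n H v - κ n v)
                  ≤ C * Real.sqrt (Real.log n / (n : ℝ) ^ (s - 1))}).toReal)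
          atTop (nhds 1)) →
      Tendsto (fun (n : ℕ) => ε n * Real.sqrt ((n : ℝ) ^ (s - 1) / Real.log n)) atTop atTop →
      ∀ γ : (n : ℕ) → Fin n → ℝ, (∀ n, ∀ v : Fin n, |γ n v| ≤ M) →
        Tendsto (fun n =>
          riskLinf n s M (ε n)
            (fun H => 2 * C * Real.sqrt (Real.log n / (n : ℝ) ^ (s - 1))
                        ≤ supNorm (fun v => mle n H v - γ n v))
            (γ n)) atTop (nhds 0))
    ∧
    -- (b) all tests are asymptotically powerless below the threshold
    (Tendsto (fun (n : ℕ) => ε n * (n : ℝ) ^ (((s : ℝ) - 1) / 2)) atTop (nhds 0) →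
      ∀ ψ : (n : ℕ) → (Finset (Fin n) → Bool) → Prop,
        ∃ γ : (n : ℕ) → Fin n → ℝ, (∀ n, ∀ v : Fin n, |γ n v| ≤ M) ∧
          Tendsto (fun n => riskLinf n s M (ε n) (ψ n) (γ n)) atTop (nhds 1)) :=
  ⟨fun _ hC hmle hεa γ hγ => tendsto_riskLinf_supNormTest s M ε mle hC hmle hεa γ hγ,
    fun hεs ψ => exists_tendsto_riskLinf_one s (by omega) M hM ε hε hεs ψ⟩

/-- **Theorem 3.4 (minimax detection threshold in the `L_∞` norm).**
(a) If `ε_n √(n^{s−1}/log n) → ∞`, the test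
`φ^max_{n,s} = 1{‖β̂_s − γ‖_∞ ≥ 2C √(log n/n^{s−1})}`, with `C > 0` chosen so that
`‖β̂_s − κ‖_∞ ≤ C √(log n/n^{s−1})` holds with probability `→ 1` under every `κ ∈ B(M)`,
is asymptotically powerful: its worst-case risk tends to `0` for every null `γ ∈ B(M)`.
(b) If `ε_n n^{(s−1)/2} → 0`, all tests are asymptotically powerless: for every sequence of
tests there is a null `γ ∈ B(M)` whose worst-case risk tends to `1`. -/
theorem minimax_testing_Linf
    (s : ℕ) (hs : 2 ≤ s) (M : ℝ) (hM : 0 < M)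
    (ε : ℕ → ℝ) (hε : ∀ n, 0 < ε n)
    (mle : (n : ℕ) → (Finset (Fin n) → Bool) → Fin n → ℝ)
    (hmle : ∀ n H, (∃ b, IsMLE n s H b) → IsMLE n s H (mle n H)) :
    -- (a) the sup-norm test is asymptotically powerful above the threshold
    (∀ C : ℝ, 0 < C →
      (∀ κ : (n : ℕ) → Fin n → ℝ, (∀ n, ∀ v : Fin n, |κ n v| ≤ M) →
        Tendsto (fun n =>
          (uniformModel n s (κ n)
            {H | supNorm (fun v => mle n H v - κ n v)
                  ≤ C * Real.sqrt (Real.log n / (n : ℝ) ^ (s - 1))}).toReal)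
          atTop (nhds 1)) →
      Tendsto (fun (n : ℕ) => ε n * Real.sqrt ((n : ℝ) ^ (s - 1) / Real.log n)) atTop atTop →
      ∀ γ : (n : ℕ) → Fin n → ℝ, (∀ n, ∀ v : Fin n, |γ n v| ≤ M) →
        Tendsto (fun n =>
          riskLinf n s M (ε n)
            (fun H => 2 * C * Real.sqrt (Real.log n / (n : ℝ) ^ (s - 1))
                        ≤ supNorm (fun v => mle n H v - γ n v))
            (γ n)) atTop (nhds 0))
    ∧
    -- (b) all tests are asymptotically powerless below the threshold
    (Tendsto (fun (n : ℕ) => ε n * (n : ℝ) ^ (((s : ℝ) - 1) / 2)) atTop (nhds 0) →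
      ∀ ψ : (n : ℕ) → (Finset (Fin n) → Bool) → Prop,
        ∃ γ : (n : ℕ) → Fin n → ℝ, (∀ n, ∀ v : Fin n, |γ n v| ≤ M) ∧
          Tendsto (fun n => riskLinf n s M (ε n) (ψ n) (γ n)) atTop (nhds 1)) :=
  minimax_testing_Linf_general s hs M hM ε hε mle
end
end

section
/- Fix r ≥ 2, M > 0, 2 ≤ s ≤ r and β_s ∈ B(M). Then there exist constants C₁', C₂' > 0 depending only on r and M such that for every β ∈ ℝ^n, the Hessian ∇²ℓ_{n,s}(β) of the negative log-likelihood (which does not depend on the observed hypergraph) satisfies C₁'·e^{−s‖β − β_s‖_2}·n^{s−1} ≤ λ_min(∇²ℓ_{n,s}(β)) ≤ λ_max(∇²ℓ_{n,s}(β)) ≤ C₂'·n^{s−1}. Consequently, for each constant K > 0 there exist constants C₁, C₂ > 0 depending on r, K, M such that C₁·n^{s−1} ≤ inf{λ_min(∇²ℓ_{n,s}(β)) : ‖β − β_s‖_2 ≤ K} ≤ sup{λ_max(∇²ℓ_{n,s}(β)) : ‖β − β_s‖_2 ≤ K} ≤ C₂·n^{s−1}. -/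
open MeasureTheory ProbabilityTheory Filter Finset Matrix

noncomputable section

/-- The smallest eigenvalue of a real symmetric (Hermitian) matrix. -/
def lambdaMin {n : ℕ} (A : Matrix (Fin n) (Fin n) ℝ) : ℝ :=
  if h : A.IsHermitian then ⨅ i, h.eigenvalues i else 0

/-- The largest eigenvalue of a real symmetric (Hermitian) matrix. -/
def lambdaMax {n : ℕ} (A : Matrix (Fin n) (Fin n) ℝ) : ℝ :=
  if h : A.IsHermitian then ⨆ i, h.eigenvalues i else 0

/-!
The quadratic form of the Hessian is `x ⬝ Σ x = ∑_{|e| = s} w_e (∑_{v ∈ e} x_v)²` with logistic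
variances `w_e = σ'(∑_{v ∈ e} β_v)`, and `e^{-|t|}/4 ≤ σ'(t) ≤ 1/4`. For unit weights, counting the
`s`-sets through a point or a pair gives
`∑_{|e| = s} (∑_{v ∈ e} x_v)² = C(n-2, s-1) ‖x‖² + C(n-2, s-2) (∑_v x_v)²`,
which lies between `C(n-2, s-1) ‖x‖²` and `(C(n-2, s-1) + n C(n-2, s-2)) ‖x‖²`, both of order
`n^{s-1} ‖x‖²` once `n ≥ 2s`. Since `|∑_{v ∈ e} β_v| ≤ s (M + ‖β - β_s‖₂)`, every weight is at least
`e^{-s (M + ‖β - β_s‖₂)} / 4`, and the Rayleigh quotient transfers these bounds to the extreme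
eigenvalues.
-/

section HyperedgeSums

variable {α : Type*} [Fintype α] [DecidableEq α]

theorem card_filter_card_eq_mem_mem {s : ℕ} (hs : 2 ≤ s) (hα : 2 ≤ Fintype.card α) (u v : α) :
    (Finset.univ.filter (fun e : Finset α => e.card = s ∧ u ∈ e ∧ v ∈ e)).card
      = (Fintype.card α - 2).choose (s - 2)
        + if u = v then (Fintype.card α - 2).choose (s - 1) else 0 := by
  have hfilter : Finset.univ.filter (fun e : Finset α => e.card = s ∧ u ∈ e ∧ v ∈ e)
      = (Finset.univ.powersetCard s).filter ({u, v} ⊆ ·) := by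
    ext e
    simp [Finset.mem_powersetCard, Finset.insert_subset_iff]
  rw [hfilter, Finset.card_filter_powersetCard_subset _ _ _ (Finset.subset_univ _)
    (Finset.card_le_two.trans hs), Finset.card_univ]
  split_ifs with huv
  · subst huv
    obtain ⟨m, hm⟩ : ∃ m, Fintype.card α = m + 2 := ⟨_, (Nat.sub_add_cancel hα).symm⟩
    obtain ⟨k, rfl⟩ : ∃ k, s = k + 2 := ⟨_, (Nat.sub_add_cancel hs).symm⟩
    simp [hm, Nat.choose_succ_succ]
  · rw [Finset.card_pair huv, add_zero]

theorem sum_mul_sq_sum_eq (s : ℕ) (w : Finset α → ℝ) (x : α → ℝ) :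
    ∑ e ∈ Finset.univ.filter (fun e : Finset α => e.card = s), w e * (∑ v ∈ e, x v) ^ 2
      = ∑ u, ∑ v, x u * x v *
          ∑ e ∈ Finset.univ.filter (fun e : Finset α => e.card = s ∧ u ∈ e ∧ v ∈ e), w e := by
  have hinner : ∀ u v : α,
      ∑ e ∈ Finset.univ.filter (fun e : Finset α => e.card = s ∧ u ∈ e ∧ v ∈ e), w e
        = ∑ e ∈ Finset.univ.filter (fun e : Finset α => e.card = s),
            if u ∈ e then if v ∈ e then w e else 0 else 0 := by
    intro u v
    rw [← Finset.filter_filter, Finset.sum_filter]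
    simp only [ite_and]
  simp_rw [hinner, Finset.mul_sum]
  calc _ = ∑ e ∈ Finset.univ.filter (fun e : Finset α => e.card = s), ∑ u, ∑ v,
          x u * x v * if u ∈ e then if v ∈ e then w e else 0 else 0 := by
        refine Finset.sum_congr rfl fun e _ => ?_
        simp only [mul_ite, mul_zero, Finset.sum_ite_irrel, Finset.sum_const_zero,
          Finset.sum_ite_mem, Finset.univ_inter]
        rw [sq, Finset.sum_mul_sum, Finset.mul_sum]
        refine Finset.sum_congr rfl fun u _ => ?_
        rw [Finset.mul_sum]
        exact Finset.sum_congr rfl fun v _ => by ring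
    _ = _ := by
        rw [Finset.sum_comm]
        exact Finset.sum_congr rfl fun u _ => Finset.sum_comm

theorem sum_sq_sum_eq {s : ℕ} (hs : 2 ≤ s) (hα : 2 ≤ Fintype.card α) (x : α → ℝ) :
    ∑ e ∈ Finset.univ.filter (fun e : Finset α => e.card = s), (∑ v ∈ e, x v) ^ 2
      = (Fintype.card α - 2).choose (s - 1) * (x ⬝ᵥ x)
        + (Fintype.card α - 2).choose (s - 2) * (∑ v, x v) ^ 2 := by
  have h := sum_mul_sq_sum_eq s (fun _ => (1 : ℝ)) x
  simp only [one_mul, Finset.sum_const, nsmul_eq_mul, mul_one,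
    card_filter_card_eq_mem_mem hs hα] at h
  rw [h]
  simp only [Nat.cast_add, Nat.cast_ite, Nat.cast_zero, mul_add, mul_ite, mul_zero,
    Finset.sum_add_distrib, Finset.sum_ite_eq, Finset.mem_univ, if_true]
  rw [dotProduct, sq, Finset.sum_mul_sum, Finset.mul_sum, Finset.mul_sum, add_comm]
  congr 1
  · exact Finset.sum_congr rfl fun u _ => by ring
  · refine Finset.sum_congr rfl fun u _ => ?_
    rw [Finset.mul_sum]
    exact Finset.sum_congr rfl fun v _ => by ring

theorem mul_choose_mul_dotProduct_le_sum_mul_sq_sum {s : ℕ} (hs : 2 ≤ s)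
    (hα : 2 ≤ Fintype.card α) {w : Finset α → ℝ} {c : ℝ} (hc : 0 ≤ c)
    (hw : ∀ e : Finset α, e.card = s → c ≤ w e) (x : α → ℝ) :
    c * (Fintype.card α - 2).choose (s - 1) * (x ⬝ᵥ x)
      ≤ ∑ e ∈ Finset.univ.filter (fun e : Finset α => e.card = s), w e * (∑ v ∈ e, x v) ^ 2 := by
  have hrest : 0 ≤ c * ((Fintype.card α - 2).choose (s - 2) * (∑ v, x v) ^ 2) := by positivity
  calc c * (Fintype.card α - 2).choose (s - 1) * (x ⬝ᵥ x)
      ≤ c * ((Fintype.card α - 2).choose (s - 1) * (x ⬝ᵥ x)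
          + (Fintype.card α - 2).choose (s - 2) * (∑ v, x v) ^ 2) := by linarith
    _ = ∑ e ∈ Finset.univ.filter (fun e : Finset α => e.card = s), c * (∑ v ∈ e, x v) ^ 2 := by
        rw [← Finset.mul_sum, sum_sq_sum_eq hs hα]
    _ ≤ _ := Finset.sum_le_sum fun e he =>
        mul_le_mul_of_nonneg_right (hw e (Finset.mem_filter.1 he).2) (sq_nonneg _)

theorem sum_mul_sq_sum_le {s : ℕ} (hs : 2 ≤ s) (hα : 2 ≤ Fintype.card α) {w : Finset α → ℝ}
    {c : ℝ} (hc : 0 ≤ c) (hw : ∀ e : Finset α, e.card = s → w e ≤ c) (x : α → ℝ) :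
    ∑ e ∈ Finset.univ.filter (fun e : Finset α => e.card = s), w e * (∑ v ∈ e, x v) ^ 2
      ≤ c * ((Fintype.card α - 2).choose (s - 1)
          + Fintype.card α * (Fintype.card α - 2).choose (s - 2)) * (x ⬝ᵥ x) := by
  have hcs : (∑ v, x v) ^ 2 ≤ Fintype.card α * (x ⬝ᵥ x) := by
    simpa [dotProduct, sq] using sq_sum_le_card_mul_sum_sq (s := Finset.univ) (f := x)
  have hchoose : (0 : ℝ) ≤ (Fintype.card α - 2).choose (s - 2) := Nat.cast_nonneg _
  calc _ ≤ ∑ e ∈ Finset.univ.filter (fun e : Finset α => e.card = s), c * (∑ v ∈ e, x v) ^ 2 :=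
        Finset.sum_le_sum fun e he =>
          mul_le_mul_of_nonneg_right (hw e (Finset.mem_filter.1 he).2) (sq_nonneg _)
    _ = c * ((Fintype.card α - 2).choose (s - 1) * (x ⬝ᵥ x)
          + (Fintype.card α - 2).choose (s - 2) * (∑ v, x v) ^ 2) := by
        rw [← Finset.mul_sum, sum_sq_sum_eq hs hα]
    _ ≤ _ := by
        rw [mul_assoc c]
        gcongr c * ?_
        nlinarith [mul_le_mul_of_nonneg_left hcs hchoose]

end HyperedgeSums

theorem Nat.pow_le_factorial_mul_two_pow_mul_choose {n s : ℕ} (hs : 1 ≤ s) (hn : 2 * s ≤ n) :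
    n ^ (s - 1) ≤ (s - 1).factorial * 2 ^ (s - 1) * (n - 2).choose (s - 1) := by
  calc n ^ (s - 1) ≤ (2 * (n - 2 + 1 - (s - 1))) ^ (s - 1) := Nat.pow_le_pow_left (by omega) _
    _ = 2 ^ (s - 1) * (n - 2 + 1 - (s - 1)) ^ (s - 1) := Nat.mul_pow _ _ _
    _ ≤ 2 ^ (s - 1) * (n - 2).descFactorial (s - 1) :=
        Nat.mul_le_mul_left _ (Nat.pow_sub_le_descFactorial _ _)
    _ = (s - 1).factorial * 2 ^ (s - 1) * (n - 2).choose (s - 1) := by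
        rw [Nat.descFactorial_eq_factorial_mul_choose]; ring

theorem Nat.choose_add_mul_choose_le_two_mul_pow {n s : ℕ} (hs : 2 ≤ s) :
    (n - 2).choose (s - 1) + n * (n - 2).choose (s - 2) ≤ 2 * n ^ (s - 1) := by
  have h₁ : (n - 2).choose (s - 1) ≤ n ^ (s - 1) :=
    (Nat.choose_le_pow _ _).trans (Nat.pow_le_pow_left (by omega) _)
  have h₂ : n * (n - 2).choose (s - 2) ≤ n ^ (s - 1) :=
    calc n * (n - 2).choose (s - 2) ≤ n * n ^ (s - 2) :=
          Nat.mul_le_mul_left _ ((Nat.choose_le_pow _ _).trans (Nat.pow_le_pow_left (by omega) _))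
      _ = n ^ (s - 1) := by rw [← pow_succ']; congr 1; omega
  omega

theorem exp_div_one_add_exp_sq_le (t : ℝ) : Real.exp t / (1 + Real.exp t) ^ 2 ≤ 1 / 4 := by
  rw [div_le_div_iff₀ (by positivity) (by norm_num)]
  nlinarith [sq_nonneg (1 - Real.exp t)]

theorem exp_neg_abs_div_four_le (t : ℝ) :
    Real.exp (-|t|) / 4 ≤ Real.exp t / (1 + Real.exp t) ^ 2 := by
  rw [div_le_div_iff₀ (by norm_num) (by positivity)]
  have hpos := Real.exp_pos t
  rcases abs_cases t with ⟨habs, ht⟩ | ⟨habs, ht⟩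
  · have hinv : Real.exp (-t) * Real.exp t = 1 := by rw [← Real.exp_add]; simp
    have h1 : 1 ≤ Real.exp t := Real.one_le_exp ht
    rw [habs]
    nlinarith [Real.exp_pos (-t)]
  · have h1 : Real.exp t ≤ 1 := Real.exp_le_one_iff.2 ht.le
    have h4 : (1 + Real.exp t) ^ 2 ≤ 4 := by nlinarith
    rw [habs, neg_neg]
    nlinarith [mul_le_mul_of_nonneg_left h4 hpos.le]

theorem abs_le_l2norm {n : ℕ} (x : Fin n → ℝ) (v : Fin n) : |x v| ≤ l2norm x := by
  rw [l2norm, ← Real.sqrt_sq_eq_abs]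
  exact Real.sqrt_le_sqrt (Finset.single_le_sum (fun u _ => sq_nonneg (x u)) (Finset.mem_univ v))

theorem abs_sum_le_card_mul_add_l2norm {n : ℕ} {M : ℝ} {βs : Fin n → ℝ}
    (hβs : ∀ v, |βs v| ≤ M) (β : Fin n → ℝ) (e : Finset (Fin n)) :
    |∑ v ∈ e, β v| ≤ e.card * (M + l2norm (fun v => β v - βs v)) := by
  calc |∑ v ∈ e, β v| ≤ ∑ v ∈ e, |β v| := Finset.abs_sum_le_sum_abs _ _
    _ ≤ ∑ _v ∈ e, (M + l2norm (fun v => β v - βs v)) := Finset.sum_le_sum fun v _ =>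
        calc |β v| ≤ |βs v| + |β v - βs v| := by simpa using abs_add_le (βs v) (β v - βs v)
          _ ≤ _ := add_le_add (hβs v) (abs_le_l2norm (fun v => β v - βs v) v)
    _ = _ := by rw [Finset.sum_const, nsmul_eq_mul]

theorem covMat_isHermitian (n s : ℕ) (β : Fin n → ℝ) : (covMat n s β).IsHermitian := by
  ext u v
  simp only [conjTranspose_apply, covMat, of_apply, star_trivial]
  refine Finset.sum_congr ?_ fun _ _ => rfl
  ext e
  simp only [Finset.mem_filter]
  tauto

theorem dotProduct_covMat_mulVec (n s : ℕ) (β x : Fin n → ℝ) :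
    x ⬝ᵥ covMat n s β *ᵥ x
      = ∑ e ∈ Finset.univ.filter (fun e : Finset (Fin n) => e.card = s),
          Real.exp (∑ w ∈ e, β w) / (1 + Real.exp (∑ w ∈ e, β w)) ^ 2 * (∑ v ∈ e, x v) ^ 2 := by
  rw [sum_mul_sq_sum_eq]
  simp only [dotProduct, mulVec, covMat, of_apply, Finset.mul_sum, Finset.sum_mul]
  exact Finset.sum_congr rfl fun u _ => Finset.sum_congr rfl fun v _ =>
    Finset.sum_congr rfl fun e _ => by ring

theorem Matrix.IsHermitian.exists_eigenvalues_eq_dotProduct_mulVec {ι : Type*} [Fintype ι]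
    [DecidableEq ι] {A : Matrix ι ι ℝ} (hA : A.IsHermitian) (i : ι) :
    ∃ x : ι → ℝ, x ⬝ᵥ x = 1 ∧ hA.eigenvalues i = x ⬝ᵥ A *ᵥ x := by
  refine ⟨hA.eigenvectorBasis i, ?_, by simpa using hA.eigenvalues_eq i⟩
  have h := EuclideanSpace.inner_eq_star_dotProduct (hA.eigenvectorBasis i) (hA.eigenvectorBasis i)
  rw [real_inner_self_eq_norm_sq, hA.eigenvectorBasis.orthonormal.1 i, star_trivial] at h
  simpa using h.symm

theorem le_lambdaMin_of_le_dotProduct_mulVec {n : ℕ} [NeZero n] {A : Matrix (Fin n) (Fin n) ℝ}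
    (hA : A.IsHermitian) {a : ℝ} (h : ∀ x, a * (x ⬝ᵥ x) ≤ x ⬝ᵥ A *ᵥ x) : a ≤ lambdaMin A := by
  rw [lambdaMin, dif_pos hA]
  refine le_ciInf fun i => ?_
  obtain ⟨x, hx, hi⟩ := hA.exists_eigenvalues_eq_dotProduct_mulVec i
  simpa [hx, hi] using h x

theorem lambdaMax_le_of_dotProduct_mulVec_le {n : ℕ} [NeZero n] {A : Matrix (Fin n) (Fin n) ℝ}
    (hA : A.IsHermitian) {b : ℝ} (h : ∀ x, x ⬝ᵥ A *ᵥ x ≤ b * (x ⬝ᵥ x)) : lambdaMax A ≤ b := by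
  rw [lambdaMax, dif_pos hA]
  refine ciSup_le fun i => ?_
  obtain ⟨x, hx, hi⟩ := hA.exists_eigenvalues_eq_dotProduct_mulVec i
  simpa [hx, hi] using h x

theorem lambdaMin_le_lambdaMax {n : ℕ} [NeZero n] (A : Matrix (Fin n) (Fin n) ℝ) :
    lambdaMin A ≤ lambdaMax A := by
  unfold lambdaMin lambdaMax
  split_ifs
  · exact (ciInf_le (Set.finite_range _).bddBelow 0).trans
      (le_ciSup (Set.finite_range _).bddAbove 0)
  · rfl

theorem covMat_eigenvalue_bounds {n s : ℕ} (hs : 2 ≤ s) (hn : 2 * s ≤ n) {M : ℝ}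
    {βs : Fin n → ℝ} (hβs : ∀ v, |βs v| ≤ M) (β : Fin n → ℝ) :
    Real.exp (-(s : ℝ) * M) / (4 * ((s - 1).factorial * 2 ^ (s - 1)))
        * Real.exp (-(s : ℝ) * l2norm (fun v => β v - βs v)) * (n : ℝ) ^ (s - 1)
      ≤ lambdaMin (covMat n s β)
    ∧ lambdaMin (covMat n s β) ≤ lambdaMax (covMat n s β)
    ∧ lambdaMax (covMat n s β) ≤ 1 / 2 * (n : ℝ) ^ (s - 1) := by
  have : NeZero n := ⟨by omega⟩
  have hA := covMat_isHermitian n s β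
  have hcard : 2 ≤ Fintype.card (Fin n) := by rw [Fintype.card_fin]; omega
  set d := l2norm (fun v => β v - βs v)
  set c := Real.exp (-(s * (M + d))) / 4 with hc
  have hweight : ∀ e : Finset (Fin n), e.card = s →
      c ≤ Real.exp (∑ w ∈ e, β w) / (1 + Real.exp (∑ w ∈ e, β w)) ^ 2 := fun e he => by
    have hsum := abs_sum_le_card_mul_add_l2norm hβs β e
    rw [he] at hsum
    exact (div_le_div_of_nonneg_right (Real.exp_le_exp.2 (neg_le_neg hsum)) (by norm_num)).trans
      (exp_neg_abs_div_four_le _)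
  have hmin : c * (n - 2).choose (s - 1) ≤ lambdaMin (covMat n s β) :=
    le_lambdaMin_of_le_dotProduct_mulVec hA fun x => by
      simpa [dotProduct_covMat_mulVec] using
        mul_choose_mul_dotProduct_le_sum_mul_sq_sum hs hcard (by positivity) hweight x
  have hmax : lambdaMax (covMat n s β)
      ≤ 1 / 4 * ((n - 2).choose (s - 1) + n * (n - 2).choose (s - 2)) :=
    lambdaMax_le_of_dotProduct_mulVec_le hA fun x => by
      simpa [dotProduct_covMat_mulVec] using
        sum_mul_sq_sum_le hs hcard (by norm_num) (fun e _ => exp_div_one_add_exp_sq_le _) x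
  refine ⟨le_trans ?_ hmin, lambdaMin_le_lambdaMax _, hmax.trans ?_⟩
  · have hpow : (n : ℝ) ^ (s - 1) ≤ (s - 1).factorial * 2 ^ (s - 1) * (n - 2).choose (s - 1) := by
      exact_mod_cast Nat.pow_le_factorial_mul_two_pow_mul_choose (by omega) hn
    have hexp : Real.exp (-(s * (M + d))) = Real.exp (-(s : ℝ) * M) * Real.exp (-(s : ℝ) * d) := by
      rw [← Real.exp_add]; ring_nf
    calc _ ≤ Real.exp (-(s : ℝ) * M) / (4 * ((s - 1).factorial * 2 ^ (s - 1)))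
          * Real.exp (-(s : ℝ) * d)
          * ((s - 1).factorial * 2 ^ (s - 1) * (n - 2).choose (s - 1)) := by gcongr
      _ = c * (n - 2).choose (s - 1) := by
        rw [hc, hexp]
        field_simp
  · have hchoose : ((n - 2).choose (s - 1) + n * (n - 2).choose (s - 2) : ℝ)
        ≤ 2 * (n : ℝ) ^ (s - 1) := by
      exact_mod_cast Nat.choose_add_mul_choose_le_two_mul_pow hs
    linarith

theorem hessian_eigenvalue_bounds_general
    (M : ℝ)
    (s : ℕ) (hs : 2 ≤ s) :
    (∃ C₁' > 0, ∃ C₂' > 0, ∃ N : ℕ, ∀ n ≥ N, ∀ βs : Fin n → ℝ, (∀ v, |βs v| ≤ M) →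
      ∀ β : Fin n → ℝ,
        C₁' * Real.exp (-(s : ℝ) * l2norm (fun v => β v - βs v)) * (n : ℝ) ^ (s - 1)
            ≤ lambdaMin (covMat n s β)
        ∧ lambdaMin (covMat n s β) ≤ lambdaMax (covMat n s β)
        ∧ lambdaMax (covMat n s β) ≤ C₂' * (n : ℝ) ^ (s - 1))
    ∧
    (∀ K : ℝ, 0 < K →
      ∃ C₁ > 0, ∃ C₂ > 0, ∃ N : ℕ, ∀ n ≥ N, ∀ βs : Fin n → ℝ, (∀ v, |βs v| ≤ M) →
        ∀ β : Fin n → ℝ, l2norm (fun v => β v - βs v) ≤ K →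
          C₁ * (n : ℝ) ^ (s - 1) ≤ lambdaMin (covMat n s β)
          ∧ lambdaMax (covMat n s β) ≤ C₂ * (n : ℝ) ^ (s - 1)) := by
  set C := Real.exp (-(s : ℝ) * M) / (4 * ((s - 1).factorial * 2 ^ (s - 1)))
  refine ⟨⟨C, by positivity, 1 / 2, by norm_num, 2 * s, fun n hn βs hβs β =>
    covMat_eigenvalue_bounds hs hn hβs β⟩, fun K _ => ?_⟩
  refine ⟨C * Real.exp (-(s : ℝ) * K), by positivity, 1 / 2, by norm_num, 2 * s,
    fun n hn βs hβs β hβ => ?_⟩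
  obtain ⟨hmin, -, hmax⟩ := covMat_eigenvalue_bounds hs hn hβs β
  refine ⟨le_trans ?_ hmin, hmax⟩
  have hexp : Real.exp (-(s : ℝ) * K) ≤ Real.exp (-(s : ℝ) * l2norm (fun v => β v - βs v)) := by
    rw [Real.exp_le_exp, neg_mul, neg_mul, neg_le_neg_iff]
    gcongr
  gcongr C * ?_ * _

/-- **Lemma A.2 (eigenvalue bounds for the Hessian).**
The Hessian `∇²ℓ_{n,s}(β)` of the negative log-likelihood equals `covMat n s β`.  There exist
constants `C₁', C₂' > 0` depending only on `r` and `M` such that, for all large `n`, all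
`β_s ∈ B(M)` and all `β ∈ ℝ^n`,
`C₁' e^{−s‖β−β_s‖₂} n^{s−1} ≤ λ_min(∇²ℓ_{n,s}(β)) ≤ λ_max(∇²ℓ_{n,s}(β)) ≤ C₂' n^{s−1}`;
consequently, for every `K > 0` there are `C₁, C₂ > 0` (depending on `r, K, M`) with
`C₁ n^{s−1} ≤ λ_min(∇²ℓ_{n,s}(β))` and `λ_max(∇²ℓ_{n,s}(β)) ≤ C₂ n^{s−1}` uniformly over
`‖β − β_s‖₂ ≤ K`. -/
theorem hessian_eigenvalue_bounds
    (r : ℕ) (hr : 2 ≤ r) (M : ℝ) (hM : 0 < M)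
    (s : ℕ) (hs : 2 ≤ s) (hsr : s ≤ r) :
    (∃ C₁' > 0, ∃ C₂' > 0, ∃ N : ℕ, ∀ n ≥ N, ∀ βs : Fin n → ℝ, (∀ v, |βs v| ≤ M) →
      ∀ β : Fin n → ℝ,
        C₁' * Real.exp (-(s : ℝ) * l2norm (fun v => β v - βs v)) * (n : ℝ) ^ (s - 1)
            ≤ lambdaMin (covMat n s β)
        ∧ lambdaMin (covMat n s β) ≤ lambdaMax (covMat n s β)
        ∧ lambdaMax (covMat n s β) ≤ C₂' * (n : ℝ) ^ (s - 1))
    ∧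
    (∀ K : ℝ, 0 < K →
      ∃ C₁ > 0, ∃ C₂ > 0, ∃ N : ℕ, ∀ n ≥ N, ∀ βs : Fin n → ℝ, (∀ v, |βs v| ≤ M) →
        ∀ β : Fin n → ℝ, l2norm (fun v => β v - βs v) ≤ K →
          C₁ * (n : ℝ) ^ (s - 1) ≤ lambdaMin (covMat n s β)
          ∧ lambdaMax (covMat n s β) ≤ C₂ * (n : ℝ) ^ (s - 1)) :=
  hessian_eigenvalue_bounds_general M s hs
end
end

section
/- Fix n ≥ 1 and 2 ≤ s ≤ n. Let D_s ⊂ ℝ^n be the set of all degree sequences (d_s(1),…,d_s(n)) of s-uniform hypergraphs on vertex set [n], and let R_s = {g(x) : x ∈ ℝ^n} where g: ℝ^n → ℝ^n has coordinates g_u(x) = Σ_{e ∈ C([n],s): u ∈ e} exp(Σ_{w∈e} x_w)/(1+exp(Σ_{w∈e} x_w)), i.e., R_s is the set of all expected degree sequences of the s-uniform hypergraph β-model. Then the convex hull of D_s equals the closure of R_s: conv(D_s) = cl(R_s). -/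
open MeasureTheory ProbabilityTheory Filter Finset Matrix

noncomputable section

/-! Let `A` be the incidence matrix between the set `E` of `s`-subsets of `[n]` and `[n]`.
Degree sequences are the vectors `pᵀA` with `p ∈ {0,1}^E`, so their convex hull is the image of
the cube `[0,1]^E` under `p ↦ pᵀA`; expected degree sequences are the vectors `σ(Ax)ᵀA`, `σ` the
logistic function, so they lie in the image of the open cube. Conversely, for `p ∈ (0,1)^E` the
loss `t ↦ ∑ₑ (log (1 + exp tₑ) - pₑ tₑ)` is coercive on `ℝ^E`, hence attains its minimum on the
range of `A` at some `t = Ax`, where the first-order condition reads `(σ(Ax) - p)ᵀA = 0`. So the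
expected degree sequences are exactly the image of the open cube, whose closure is the image of
the closed cube. -/

def softplus (t : ℝ) : ℝ := Real.log (1 + Real.exp t)

lemma hasDerivAt_softplus (t : ℝ) : HasDerivAt softplus (logistic t) t := by
  have h := ((Real.hasDerivAt_exp t).const_add 1).log (by positivity)
  unfold softplus
  simpa [logistic, div_eq_mul_inv, mul_comm] using h

lemma continuous_softplus : Continuous softplus :=
  continuous_iff_continuousAt.2 fun t => (hasDerivAt_softplus t).continuousAt

lemma softplus_nonneg (t : ℝ) : 0 ≤ softplus t :=
  Real.log_nonneg (by linarith [Real.exp_pos t])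

lemma le_softplus (t : ℝ) : t ≤ softplus t :=
  calc t = Real.log (Real.exp t) := (Real.log_exp t).symm
    _ ≤ softplus t := Real.log_le_log (Real.exp_pos t) (by linarith)

lemma min_mul_abs_le_softplus_sub_mul (p t : ℝ) :
    min p (1 - p) * |t| ≤ softplus t - p * t := by
  rcases le_total 0 t with ht | ht
  · rw [abs_of_nonneg ht]
    nlinarith [min_le_right p (1 - p), le_softplus t]
  · rw [abs_of_nonpos ht]
    nlinarith [min_le_left p (1 - p), softplus_nonneg t]

lemma logistic_mem_Ioo (t : ℝ) : logistic t ∈ Set.Ioo (0 : ℝ) 1 := by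
  have := Real.exp_pos t
  refine ⟨by unfold logistic; positivity, ?_⟩
  rw [logistic, div_lt_one (by positivity)]
  linarith

section LogisticLoss

variable {ι : Type*} [Fintype ι]

def logisticLoss (p t : ι → ℝ) : ℝ := ∑ i, (softplus (t i) - p i * t i)

lemma continuous_logisticLoss (p : ι → ℝ) : Continuous (logisticLoss p) :=
  continuous_finsetSum _ fun i _ =>
    (continuous_softplus.comp (continuous_apply i)).sub (continuous_const.mul (continuous_apply i))

lemma min_mul_abs_le_logisticLoss {p : ι → ℝ} (hp : ∀ i, p i ∈ Set.Icc (0 : ℝ) 1)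
    (t : ι → ℝ) (j : ι) : min (p j) (1 - p j) * |t j| ≤ logisticLoss p t := by
  have hterm i : min (p i) (1 - p i) * |t i| ≤ softplus (t i) - p i * t i :=
    min_mul_abs_le_softplus_sub_mul (p i) (t i)
  refine (hterm j).trans (Finset.single_le_sum (f := fun i => softplus (t i) - p i * t i)
    (fun i _ => ?_) (Finset.mem_univ j))
  exact (mul_nonneg (le_min (hp i).1 (sub_nonneg.2 (hp i).2)) (abs_nonneg _)).trans (hterm i)

lemma isCompact_setOf_logisticLoss_le {p : ι → ℝ} (hp : ∀ i, p i ∈ Set.Ioo (0 : ℝ) 1) (M : ℝ) :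
    IsCompact {t | logisticLoss p t ≤ M} := by
  have hc i : 0 < min (p i) (1 - p i) := lt_min (hp i).1 (sub_pos.2 (hp i).2)
  refine (isCompact_univ_pi fun i => isCompact_Icc (a := -(M / min (p i) (1 - p i)))
    (b := M / min (p i) (1 - p i))).of_isClosed_subset
    (isClosed_le (continuous_logisticLoss p) continuous_const) fun t ht i _ => abs_le.1 ?_
  rw [le_div_iff₀' (hc i)]
  exact (min_mul_abs_le_logisticLoss (fun i => Set.Ioo_subset_Icc_self (hp i)) t i).trans ht

lemma hasDerivAt_logisticLoss_line (p t d : ι → ℝ) :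
    HasDerivAt (fun τ : ℝ => logisticLoss p (t + τ • d)) ((logistic ∘ t - p) ⬝ᵥ d) 0 := by
  simp only [logisticLoss, dotProduct, Pi.add_apply, Pi.smul_apply, smul_eq_mul,
    Pi.sub_apply, Function.comp_apply, sub_mul]
  refine HasDerivAt.fun_sum fun i _ => HasDerivAt.sub ?_ ?_
  · have hline : HasDerivAt (fun τ : ℝ => t i + τ * d i) (d i) 0 := by
      simpa using ((hasDerivAt_id (0 : ℝ)).mul_const (d i)).const_add (t i)
    exact (hasDerivAt_softplus (t i)).comp_of_eq 0 hline (by simp)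
  · simpa using (((hasDerivAt_id (0 : ℝ)).mul_const (d i)).const_add (t i)).const_mul (p i)

lemma logistic_comp_sub_dotProduct_eq_zero {p t d : ι → ℝ}
    (hmin : ∀ τ : ℝ, logisticLoss p t ≤ logisticLoss p (t + τ • d)) :
    (logistic ∘ t - p) ⬝ᵥ d = 0 :=
  IsLocalMin.hasDerivAt_eq_zero (Filter.Eventually.of_forall fun τ => by simpa using hmin τ)
    (hasDerivAt_logisticLoss_line p t d)

end LogisticLoss

section Zonotope

variable {ι V : Type*} [Fintype ι] (A : Matrix ι V ℝ)

theorem exists_logistic_vecMul_eq [Fintype V] {p : ι → ℝ} (hp : ∀ i, p i ∈ Set.Ioo (0 : ℝ) 1) :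
    ∃ x : V → ℝ, (logistic ∘ (A *ᵥ x)) ᵥ* A = p ᵥ* A := by
  have hfar : ∀ᶠ t in Filter.cocompact (ι → ℝ) ⊓ 𝓟 (LinearMap.range A.mulVecLin),
      logisticLoss p 0 ≤ logisticLoss p t :=
    Filter.mem_inf_of_left <| Filter.mem_of_superset
      (isCompact_setOf_logisticLoss_le hp (logisticLoss p 0)).compl_mem_cocompact
      fun t (ht : ¬logisticLoss p t ≤ logisticLoss p 0) => le_of_not_ge ht
  obtain ⟨_, ⟨x, rfl⟩, hmin⟩ := (continuous_logisticLoss p).continuousOn.exists_isMinOn'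
    (Submodule.closed_of_finiteDimensional _) (zero_mem _) hfar
  refine ⟨x, ?_⟩
  -- Testing the critical point in the direction `w` yields `w ⬝ᵥ w = 0`.
  set w := (logistic ∘ (A *ᵥ x) - p) ᵥ* A
  have hcrit : (logistic ∘ (A *ᵥ x) - p) ⬝ᵥ (A *ᵥ w) = 0 :=
    logistic_comp_sub_dotProduct_eq_zero fun τ =>
      hmin ⟨x + τ • w, by simp [mulVec_add, mulVec_smul]⟩
  rwa [dotProduct_mulVec, dotProduct_self_eq_zero, sub_vecMul, sub_eq_zero] at hcrit

theorem range_logistic_vecMul [Fintype V] :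
    Set.range (fun x : V → ℝ => (logistic ∘ (A *ᵥ x)) ᵥ* A)
      = (· ᵥ* A) '' Set.pi Set.univ fun _ => Set.Ioo 0 1 := by
  ext y
  constructor
  · rintro ⟨x, rfl⟩
    exact ⟨_, fun i _ => logistic_mem_Ioo _, rfl⟩
  · rintro ⟨p, hp, rfl⟩
    exact exists_logistic_vecMul_eq A fun i => hp i (Set.mem_univ i)

theorem closure_range_logistic_vecMul [Fintype V] :
    closure (Set.range fun x : V → ℝ => (logistic ∘ (A *ᵥ x)) ᵥ* A)
      = (· ᵥ* A) '' Set.pi Set.univ fun _ => Set.Icc 0 1 := by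
  have hcont : Continuous (· ᵥ* A) := (vecMulLinear A).continuous_of_finiteDimensional
  have hcube : Set.pi Set.univ (fun _ : ι => Set.Icc (0 : ℝ) 1)
      = closure (Set.pi Set.univ fun _ => Set.Ioo 0 1) := by
    rw [closure_pi_set]
    simp [closure_Ioo zero_ne_one]
  rw [range_logistic_vecMul]
  refine subset_antisymm (closure_minimal ?_ ?_) ?_
  · exact Set.image_mono fun p hp i hi => Set.Ioo_subset_Icc_self (hp i hi)
  · exact ((isCompact_univ_pi fun _ => isCompact_Icc).image hcont).isClosed
  · rw [hcube]
    exact image_closure_subset_closure_image hcont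

theorem convexHull_range_indicator_vecMul :
    convexHull ℝ (Set.range fun b : ι → Bool => (fun i => if b i then (1 : ℝ) else 0) ᵥ* A)
      = (· ᵥ* A) '' Set.pi Set.univ fun _ => Set.Icc 0 1 := by
  have hvertices : Set.range (fun (b : ι → Bool) i => if b i then (1 : ℝ) else 0)
      = Set.pi Set.univ fun _ => {0, 1} := by
    ext p
    simp only [Set.mem_range, Set.mem_pi, Set.mem_univ, Set.mem_insert_iff,
      Set.mem_singleton_iff, true_implies]
    constructor
    · rintro ⟨b, rfl⟩ i
      cases b i <;> simp
    · intro hp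
      refine ⟨fun i => decide (p i = 1), funext fun i => ?_⟩
      rcases hp i with h | h <;> simp [h]
  rw [Set.range_comp' (· ᵥ* A), hvertices]
  change convexHull ℝ (vecMulLinear A '' _) = vecMulLinear A '' _
  rw [← LinearMap.image_convexHull, convexHull_pi]
  simp only [convexHull_pair, segment_eq_Icc zero_le_one]

end Zonotope

def incidenceMatrix (n s : ℕ) : Matrix {e : Finset (Fin n) // e.card = s} (Fin n) ℝ :=
  Matrix.of fun e v => if v ∈ e.1 then 1 else 0

lemma sum_filter_and_eq_sum_subtype {α : Type*} [Fintype α] (p q : α → Prop) [DecidablePred p]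
    [DecidablePred q] (f : α → ℝ) :
    ∑ a ∈ Finset.univ.filter (fun a => p a ∧ q a), f a
      = ∑ a : Subtype p, if q a then f a else 0 := by
  rw [← Finset.sum_subtype (Finset.univ.filter p) (by simp) fun a => if q a then f a else 0,
    Finset.sum_filter, Finset.sum_filter]
  simp only [ite_and]

lemma degree_eq_vecMul (n s : ℕ) (H : Finset (Fin n) → Bool) :
    (fun v => (degree n s H v : ℝ))
      = (fun e => if H e.1 then 1 else 0) ᵥ* incidenceMatrix n s := by
  funext v
  rw [degree, Finset.card_eq_sum_ones, Nat.cast_sum, sum_filter_and_eq_sum_subtype]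
  refine Finset.sum_congr rfl fun e _ => ?_
  by_cases hv : v ∈ e.1 <;> by_cases hH : H e.1 <;> simp [incidenceMatrix, hv, hH]

lemma expectedDegree_eq_vecMul (n s : ℕ) (x : Fin n → ℝ) :
    expectedDegree n s x = (logistic ∘ (incidenceMatrix n s *ᵥ x)) ᵥ* incidenceMatrix n s := by
  funext v
  rw [expectedDegree, sum_filter_and_eq_sum_subtype]
  refine Finset.sum_congr rfl fun e _ => ?_
  by_cases hv : v ∈ e.1 <;> simp [incidenceMatrix, mulVec, dotProduct, hv]

theorem degree_convex_hull_eq_closure_expected_general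
    (n s : ℕ) :
    convexHull ℝ
        {y : Fin n → ℝ | ∃ H : Finset (Fin n) → Bool,
          y = fun v => (degree n s H v : ℝ)}
      = closure
        {y : Fin n → ℝ | ∃ x : Fin n → ℝ, y = fun v => expectedDegree n s x v} := by
  have hdegrees : {y : Fin n → ℝ | ∃ H : Finset (Fin n) → Bool, y = fun v => (degree n s H v : ℝ)}
      = Set.range fun b : {e : Finset (Fin n) // e.card = s} → Bool =>
          (fun e => if b e then (1 : ℝ) else 0) ᵥ* incidenceMatrix n s := by
    rw [← (Subtype.val_injective.surjective_comp_right (γ := Bool)).range_comp]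
    ext y
    exact exists_congr fun H => by rw [degree_eq_vecMul, eq_comm]; rfl
  have hexpected : {y : Fin n → ℝ | ∃ x : Fin n → ℝ, y = fun v => expectedDegree n s x v}
      = Set.range fun x => (logistic ∘ (incidenceMatrix n s *ᵥ x)) ᵥ* incidenceMatrix n s := by
    ext y
    exact exists_congr fun x => by rw [expectedDegree_eq_vecMul, eq_comm]
  rw [hdegrees, hexpected, convexHull_range_indicator_vecMul, closure_range_logistic_vecMul]

/-- **Proposition A.3.**  For `2 ≤ s ≤ n`, the convex hull of the set `D_s` of all `s`-degree
sequences of `s`-uniform hypergraphs on `[n]` equals the closure of the set `R_s` of all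
expected degree sequences of the `s`-uniform hypergraph β-model. -/
theorem degree_convex_hull_eq_closure_expected
    (n s : ℕ) (hn : 1 ≤ n) (hs : 2 ≤ s) (hsn : s ≤ n) :
    convexHull ℝ
        {y : Fin n → ℝ | ∃ H : Finset (Fin n) → Bool,
          y = fun v => (degree n s H v : ℝ)}
      = closure
        {y : Fin n → ℝ | ∃ x : Fin n → ℝ, y = fun v => expectedDegree n s x v} :=
  degree_convex_hull_eq_closure_expected_general n s
end
end

section
/- Fix r ≥ 2, M > 0, 2 ≤ s ≤ r and β_s ∈ B(M). Let Σ_{n,s} and Γ_{n,s} be as follows: Σ_{n,s} has entries σ_s(u,v) = Σ_{e ∈ C([n],s): u,v ∈ e} exp(Σ_{w∈e} β_{s,w})/(1+exp(Σ_{w∈e} β_{s,w}))² with σ_s(u,u) = σ_s(u)², and Γ_{n,s} is diagonal with entries 1/σ_s(u)². Let Θ_{n,s} = Γ_{n,s}(I_n − Σ_{n,s}Γ_{n,s}) with entries θ_s(u,v). Then θ_s(u,v) = −σ_s(u,v)·1{u ≠ v}/(σ_s(u)²σ_s(v)²) for all u, v, and there is a constant C > 0 such that for all u, v, w ∈ [n],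 max{|θ_s(u,v)|, |θ_s(u,v) − θ_s(v,w)|} ≤ C·σ_{s,max}/(σ_{s,min}²·n²), where σ_{s,min} = min_{u<v} σ_s(u,v) and σ_{s,max} = max_{u<v} σ_s(u,v). -/
open MeasureTheory ProbabilityTheory Filter Finset Matrix

noncomputable section

/-- The diagonal matrix `Γ_{n,s}` with entries `1/σ_s(u)²`. -/
def gammaMat (n s : ℕ) (β : Fin n → ℝ) : Matrix (Fin n) (Fin n) ℝ :=
  Matrix.diagonal fun u => 1 / covMat n s β u u

/-- The matrix `Θ_{n,s} = Γ_{n,s}(I_n − Σ_{n,s} Γ_{n,s})`. -/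
def thetaMat (n s : ℕ) (β : Fin n → ℝ) : Matrix (Fin n) (Fin n) ℝ :=
  gammaMat n s β * (1 - covMat n s β * gammaMat n s β)

/-- The minimum off-diagonal entry `σ_{s,min} = min_{u < v} σ_s(u,v)` of `Σ_{n,s}`. -/
def offDiagMin (n s : ℕ) (β : Fin n → ℝ) : ℝ :=
  ⨅ p : {p : Fin n × Fin n // p.1 < p.2}, covMat n s β p.1.1 p.1.2

/-- The maximum off-diagonal entry `σ_{s,max} = max_{u < v} σ_s(u,v)` of `Σ_{n,s}`. -/
def offDiagMax (n s : ℕ) (β : Fin n → ℝ) : ℝ :=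
  ⨆ p : {p : Fin n × Fin n // p.1 < p.2}, covMat n s β p.1.1 p.1.2

/-!
Since `Γ` inverts the diagonal of `Σ`, the matrix `Θ = Γ - ΓΣΓ` has zero diagonal and
off-diagonal entries `-σ(u,v)/(σ(u)² σ(v)²)`. Every `s`-set `e ∋ u` contributes to `σ(u,v)`
for exactly the `s - 1` vertices `v ∈ e \ {u}`, so
`(s - 1) σ(u)² = ∑_{v ≠ u} σ(u,v) ≥ (n - 1) σ_min`. Hence `σ(u)² σ(v)² ≥ (n σ_min / 2s)²` and
`|θ(u,v)| ≤ 4 s² σ_max / (σ_min² n²)`; the bound on differences follows from the triangle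
inequality, so `C = 8 s²` works for `n ≥ s`.
-/

open Real

theorem Matrix.diagonal_one_div_diag_mul_one_sub_mul_apply {ι K : Type*} [Fintype ι]
    [DecidableEq ι] [Field K] (S : Matrix ι ι K) (hS : ∀ i, S i i ≠ 0) (i j : ι) :
    (diagonal (fun i => 1 / S i i) * (1 - S * diagonal (fun i => 1 / S i i))) i j =
      if i = j then 0 else -S i j / (S i i * S j j) := by
  rw [diagonal_mul, sub_apply, mul_diagonal, one_apply]
  split_ifs with h
  · subst h
    field_simp [hS i]
    ring
  · field_simp
    ring

section covMat

variable {n s : ℕ} (β : Fin n → ℝ)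

lemma covMat_comm (u v : Fin n) : covMat n s β u v = covMat n s β v u := by
  simp only [covMat, of_apply]
  exact sum_congr (filter_congr fun e _ => by tauto) fun _ _ => rfl

lemma covMat_pos (hs : 2 ≤ s) (hsn : s ≤ n) (u v : Fin n) : 0 < covMat n s β u v := by
  obtain ⟨e, huv, he⟩ := exists_superset_card_eq (s := {u, v}) (n := s)
    (card_le_two.trans hs) (by simpa using hsn)
  rw [covMat, of_apply]
  refine sum_pos (fun e _ => by positivity) ⟨e, ?_⟩
  simp [he, huv (mem_insert_self u {v}), huv (mem_insert_of_mem (mem_singleton_self v))]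

lemma sum_erase_covMat (hs : 1 ≤ s) (u : Fin n) :
    ∑ v ∈ univ.erase u, covMat n s β u v = ((s : ℝ) - 1) * covMat n s β u u := by
  set f := fun e : Finset (Fin n) => exp (∑ w ∈ e, β w) / (1 + exp (∑ w ∈ e, β w)) ^ 2
  set S := univ.filter fun e : Finset (Fin n) => e.card = s ∧ u ∈ e
  have hrow : ∀ v, covMat n s β u v = ∑ e ∈ S, if v ∈ e then f e else 0 := by
    intro v
    rw [← sum_filter, filter_filter]
    simp only [covMat, of_apply, f, and_assoc]
  have hdiag : covMat n s β u u = ∑ e ∈ S, f e := by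
    rw [hrow]
    exact sum_congr rfl fun e he => if_pos (mem_filter.mp he).2.2
  rw [hdiag, mul_sum]
  simp_rw [hrow]
  rw [sum_comm]
  refine sum_congr rfl fun e he => ?_
  obtain ⟨-, hcard, hu⟩ := mem_filter.mp he
  rw [sum_ite_mem, sum_const, nsmul_eq_mul, erase_inter, univ_inter, card_erase_of_mem hu,
    hcard, Nat.cast_sub hs, Nat.cast_one]

lemma thetaMat_apply (h : ∀ x, covMat n s β x x ≠ 0) (u v : Fin n) :
    thetaMat n s β u v =
      if u = v then 0 else -covMat n s β u v / (covMat n s β u u * covMat n s β v v) :=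
  Matrix.diagonal_one_div_diag_mul_one_sub_mul_apply _ h u v

lemma offDiagMin_le_covMat {u v : Fin n} (huv : u ≠ v) :
    offDiagMin n s β ≤ covMat n s β u v := by
  wlog h : u < v generalizing u v
  · rw [covMat_comm]
    exact this huv.symm (huv.lt_or_gt.resolve_left h)
  exact ciInf_le (f := fun p : {p : Fin n × Fin n // p.1 < p.2} => covMat n s β p.1.1 p.1.2)
    (Set.finite_range _).bddBelow ⟨(u, v), h⟩

lemma covMat_le_offDiagMax {u v : Fin n} (huv : u ≠ v) :
    covMat n s β u v ≤ offDiagMax n s β := by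
  wlog h : u < v generalizing u v
  · rw [covMat_comm]
    exact this huv.symm (huv.lt_or_gt.resolve_left h)
  exact le_ciSup (f := fun p : {p : Fin n × Fin n // p.1 < p.2} => covMat n s β p.1.1 p.1.2)
    (Set.finite_range _).bddAbove ⟨(u, v), h⟩

lemma offDiagMin_pos (hs : 2 ≤ s) (hsn : s ≤ n) : 0 < offDiagMin n s β := by
  have : Nonempty {p : Fin n × Fin n // p.1 < p.2} :=
    ⟨⟨(⟨0, by omega⟩, ⟨1, by omega⟩), by simp [Fin.lt_def]⟩⟩
  obtain ⟨p, hp⟩ := exists_eq_ciInf_of_finite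
    (f := fun p : {p : Fin n × Fin n // p.1 < p.2} => covMat n s β p.1.1 p.1.2)
  rw [offDiagMin, ← hp]
  exact covMat_pos β hs hsn _ _

lemma sub_one_mul_offDiagMin_le_sub_one_mul_covMat (hs : 1 ≤ s) (u : Fin n) :
    ((n : ℝ) - 1) * offDiagMin n s β ≤ ((s : ℝ) - 1) * covMat n s β u u := by
  rw [← sum_erase_covMat β hs u]
  have h := card_nsmul_le_sum (univ.erase u) _ _ fun v hv =>
    offDiagMin_le_covMat β (s := s) (Ne.symm (mem_erase.mp hv).1)
  rwa [card_erase_of_mem (mem_univ u), card_univ, Fintype.card_fin, nsmul_eq_mul,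
    Nat.cast_sub (Fin.pos u), Nat.cast_one] at h

lemma abs_thetaMat_le (hs : 2 ≤ s) (hsn : s ≤ n) (u v : Fin n) :
    |thetaMat n s β u v| ≤ 4 * s ^ 2 * offDiagMax n s β / (offDiagMin n s β ^ 2 * n ^ 2) := by
  have hpos := covMat_pos β hs hsn
  have hmin := offDiagMin_pos β hs hsn
  have h01 : (⟨0, by omega⟩ : Fin n) ≠ ⟨1, by omega⟩ := by simp
  have hmax : 0 < offDiagMax n s β :=
    hmin.trans_le ((offDiagMin_le_covMat β h01).trans (covMat_le_offDiagMax β h01))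
  rw [thetaMat_apply β fun x => (hpos x x).ne']
  split_ifs with huv
  · rw [abs_zero]
    positivity
  have hn : (2 : ℝ) ≤ n := by exact_mod_cast hs.trans hsn
  have hdiag : ∀ x, n * offDiagMin n s β ≤ 2 * s * covMat n s β x x := fun x => by
    have := sub_one_mul_offDiagMin_le_sub_one_mul_covMat β (s := s) (by omega) x
    nlinarith [(hpos x x).le]
  have hnmin : 0 < n * offDiagMin n s β := mul_pos (by positivity) hmin
  have hprod :
      (n * offDiagMin n s β) ^ 2 / (4 * s ^ 2) ≤ covMat n s β u u * covMat n s β v v := by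
    rw [div_le_iff₀ (by positivity)]
    nlinarith [mul_le_mul (hdiag u) (hdiag v) hnmin.le
      (mul_pos (by positivity : (0 : ℝ) < 2 * s) (hpos u u)).le]
  rw [abs_div, abs_neg, abs_of_pos (hpos u v), abs_of_pos (mul_pos (hpos u u) (hpos v v))]
  calc covMat n s β u v / (covMat n s β u u * covMat n s β v v)
      ≤ offDiagMax n s β / (covMat n s β u u * covMat n s β v v) :=
        div_le_div_of_nonneg_right (covMat_le_offDiagMax β huv)
          (mul_pos (hpos u u) (hpos v v)).le
    _ ≤ offDiagMax n s β / ((n * offDiagMin n s β) ^ 2 / (4 * s ^ 2)) :=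
        div_le_div_of_nonneg_left hmax.le (div_pos (pow_pos hnmin 2) (by positivity)) hprod
    _ = 4 * s ^ 2 * offDiagMax n s β / (offDiagMin n s β ^ 2 * n ^ 2) := by
        field_simp

end covMat

theorem theta_matrix_entries_and_bound_general
    (M : ℝ)
    (s : ℕ) (hs : 2 ≤ s) :
    ∃ C > 0, ∃ N : ℕ, ∀ n ≥ N, ∀ βs : Fin n → ℝ, (∀ v, |βs v| ≤ M) →
      (∀ u v : Fin n,
        thetaMat n s βs u v =
          if u = v then 0
          else -(covMat n s βs u v) / (covMat n s βs u u * covMat n s βs v v))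
      ∧ (∀ u v w : Fin n,
          max |thetaMat n s βs u v| |thetaMat n s βs u v - thetaMat n s βs v w|
            ≤ C * offDiagMax n s βs / (offDiagMin n s βs ^ 2 * (n : ℝ) ^ 2)) := by
  refine ⟨8 * s ^ 2, by positivity, s, fun n hsn βs _ => ⟨?_, fun u v w => ?_⟩⟩
  · exact thetaMat_apply βs fun x => (covMat_pos βs hs hsn x x).ne'
  · have huv := abs_thetaMat_le βs hs hsn u v
    have hvw := abs_thetaMat_le βs hs hsn v w
    have hK : 8 * (s : ℝ) ^ 2 * offDiagMax n s βs / (offDiagMin n s βs ^ 2 * n ^ 2) =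
        2 * (4 * s ^ 2 * offDiagMax n s βs / (offDiagMin n s βs ^ 2 * n ^ 2)) := by ring
    rw [hK]
    exact max_le (by linarith [(abs_nonneg _).trans huv]) ((abs_sub _ _).trans (by linarith))

/-- **Lemma C.3.**  For `β_s ∈ B(M)` and all large `n`, the entries of
`Θ_{n,s} = Γ_{n,s}(I − Σ_{n,s}Γ_{n,s})` satisfy
`θ_s(u,v) = −σ_s(u,v) 1{u ≠ v}/(σ_s(u)² σ_s(v)²)`, and there is a constant `C > 0` with
`max{|θ_s(u,v)|, |θ_s(u,v) − θ_s(v,w)|} ≤ C σ_{s,max}/(σ_{s,min}² n²)` for all `u, v, w`. -/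
theorem theta_matrix_entries_and_bound
    (r : ℕ) (hr : 2 ≤ r) (M : ℝ) (hM : 0 < M)
    (s : ℕ) (hs : 2 ≤ s) (hsr : s ≤ r) :
    ∃ C > 0, ∃ N : ℕ, ∀ n ≥ N, ∀ βs : Fin n → ℝ, (∀ v, |βs v| ≤ M) →
      (∀ u v : Fin n,
        thetaMat n s βs u v =
          if u = v then 0
          else -(covMat n s βs u v) / (covMat n s βs u u * covMat n s βs v v))
      ∧ (∀ u v w : Fin n,
          max |thetaMat n s βs u v| |thetaMat n s βs u v - thetaMat n s βs v w|
            ≤ C * offDiagMax n s βs / (offDiagMin n s βs ^ 2 * (n : ℝ) ^ 2)) :=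
  theta_matrix_entries_and_bound_general M s hs

end
end
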